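/- arXiv:2407.17210 — 6 statements merged into one kernel-verified Lean document; each statement's English description precedes it below -/
import Mathlib

section
/- Let X ⊆ ℝ^d be complete. Then for every element A of Lat^d(X), all extreme points of A belong to X: extremePoints ℝ A ⊆ X. -/
/-- `ChLat X A` means that `A` belongs to the smallest sublattice of the lattice of
convex subsets of `ℝ^d` (with meet `∩` and join `A ∨ B = convexHull ℝ (A ∪ B)`)
containing the singleton `{x}` for every `x ∈ X`. -/
inductive ChLat {d : ℕ} (X : Set (Fin d → ℝ)) : Set (Fin d → ℝ) → Prop
  | point : ∀ x ∈ X, ChLat X {x}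
  | join : ∀ A B, ChLat X A → ChLat X B → ChLat X (convexHull ℝ (A ∪ B))
  | meet : ∀ A B, ChLat X A → ChLat X B → ChLat X (A ∩ B)

section Aux

variable {d : ℕ}

local notation "E" => Fin d → ℝ

theorem ChLat.convex {X : Set E} {A : Set E} (h : ChLat X A) : Convex ℝ A := by
  induction h with
  | point x hx => exact convex_singleton x
  | join A B hA hB ihA ihB => exact convex_convexHull ℝ _
  | meet A B hA hB ihA ihB => exact ihA.inter ihB

/-- The minimal face of `C` at `z`. -/
def minFace (C : Set E) (z : E) : Set E :=
  {w ∈ C | ∃ s : ℝ, 0 < s ∧ z + s • (z - w) ∈ C}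

theorem minFace_subset {C : Set E} {z : E} : minFace C z ⊆ C := fun _ hw => hw.1

theorem self_mem_minFace {C : Set E} {z : E} (hz : z ∈ C) : z ∈ minFace C z :=
  ⟨hz, 1, one_pos, by simpa⟩

/-- Membership in an open segment through `z`, in algebraic form. -/
theorem mem_openSegment_of_extend {z w x : E} {s : ℝ} (hs : 0 < s)
    (hx : x = z + s • (z - w)) : z ∈ openSegment ℝ x w := by
  refine ⟨1 / (1 + s), s / (1 + s), by positivity, by positivity, ?_, ?_⟩
  · field_simp
  · rw [hx]; match_scalars <;> field_simp <;> ring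

theorem minFace_isExtreme {C : Set E} {z : E} (hC : Convex ℝ C) :
    IsExtreme ℝ C (minFace C z) := by
  constructor
  · exact minFace_subset
  · rintro x₁ h₁ x₂ h₂ w ⟨hwC, s, hs, hxC⟩ ⟨c, e, hc, he, hce, hw⟩
    -- `z + s • (z - w) ∈ C`, `c • x₁ + e • x₂ = w`
    have key : ∀ c e : ℝ, ∀ x₁ x₂ : E, 0 < c → 0 < e → c + e = 1 → x₁ ∈ C → x₂ ∈ C →
        c • x₁ + e • x₂ = w → x₂ ∈ minFace C z := by
      intro c e x₁ x₂ hc he hce h₁ h₂ hw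
      have he' : e = 1 - c := by linarith
      subst he'
      refine ⟨h₂, s * (1 - c) / (1 + s * c), by positivity, ?_⟩
      have h1 : (0:ℝ) < 1 + s * c := by positivity
      have hmem : (1 / (1 + s * c)) • (z + s • (z - w)) + (s * c / (1 + s * c)) • x₁ ∈ C := by
        refine hC hxC h₁ (by positivity) (by positivity) ?_
        field_simp
      convert hmem using 1
      rw [← hw]
      match_scalars <;> (field_simp; try ring)
    exact key e c x₂ x₁ he hc (by linarith) h₂ h₁ (by rw [← hw]; abel)

theorem shrink_mem {C : Set E} {z w : E} {s s' : ℝ} (hC : Convex ℝ C) (hz : z ∈ C)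
    (h0 : 0 < s') (hle : s' ≤ s) (hx : z + s • (z - w) ∈ C) : z + s' • (z - w) ∈ C := by
  have hs : 0 < s := lt_of_lt_of_le h0 hle
  have key : z + s' • (z - w) = (1 - s' / s) • z + (s' / s) • (z + s • (z - w)) := by
    match_scalars <;> (field_simp; try ring)
  rw [key]
  have hd1 : s' / s ≤ 1 := by rw [div_le_one hs]; exact hle
  exact hC hz hx (by linarith) (by positivity) (by ring)

theorem minFace_convex {C : Set E} {z : E} (hC : Convex ℝ C) (hz : z ∈ C) :
    Convex ℝ (minFace C z) := by
  rintro w₁ ⟨h₁, s₁, hs₁, hx₁⟩ w₂ ⟨h₂, s₂, hs₂, hx₂⟩ p q hp hq hpq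
  refine ⟨hC h₁ h₂ hp hq hpq, min s₁ s₂, lt_min hs₁ hs₂, ?_⟩
  have hx₁' : z + min s₁ s₂ • (z - w₁) ∈ C :=
    shrink_mem hC hz (lt_min hs₁ hs₂) (min_le_left _ _) hx₁
  have hx₂' : z + min s₁ s₂ • (z - w₂) ∈ C :=
    shrink_mem hC hz (lt_min hs₁ hs₂) (min_le_right _ _) hx₂
  have := hC hx₁' hx₂' hp hq hpq
  convert this using 1
  match_scalars <;> (try ring) <;> linear_combination (-(1 + s₁ ⊓ s₂)) * hpq

theorem minFace_min {C F : Set E} {z : E} (hF : IsExtreme ℝ C F) (hz : z ∈ F) :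
    minFace C z ⊆ F := by
  rintro w ⟨hwC, s, hs, hxC⟩
  exact hF.right_mem_of_mem_openSegment hxC hwC hz (mem_openSegment_of_extend hs rfl)

theorem minFace_inter {A B : Set E} {z : E} (hA : Convex ℝ A) (hB : Convex ℝ B)
    (hz : z ∈ A ∩ B) : minFace (A ∩ B) z = minFace A z ∩ minFace B z := by
  ext w
  constructor
  · rintro ⟨hwC, s, hs, hxC⟩
    exact ⟨⟨hwC.1, s, hs, hxC.1⟩, ⟨hwC.2, s, hs, hxC.2⟩⟩
  · rintro ⟨⟨hwA, s₁, hs₁, hx₁⟩, ⟨hwB, s₂, hs₂, hx₂⟩⟩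
    exact ⟨⟨hwA, hwB⟩, min s₁ s₂, lt_min hs₁ hs₂,
      shrink_mem hA hz.1 (lt_min hs₁ hs₂) (min_le_left _ _) hx₁,
      shrink_mem hB hz.2 (lt_min hs₁ hs₂) (min_le_right _ _) hx₂⟩

/-- Extension property of the intrinsic interior. -/
theorem extend_of_mem_intrinsicInterior {H : Set E} {z y : E}
    (hz : z ∈ intrinsicInterior ℝ H) (hy : y ∈ H) :
    ∃ s : ℝ, 0 < s ∧ z + s • (z - y) ∈ H := by
  obtain ⟨z', hz', hz'c⟩ := mem_intrinsicInterior.1 hz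
  have hzH : z ∈ H := intrinsicInterior_subset hz
  have hzspan : z ∈ affineSpan ℝ H := subset_affineSpan ℝ H hzH
  have hyspan : y ∈ affineSpan ℝ H := subset_affineSpan ℝ H hy
  have hmem : ∀ t : ℝ, z + t • (z - y) ∈ affineSpan ℝ H := by
    intro t
    have h := AffineSubspace.smul_vsub_vadd_mem (affineSpan ℝ H) t hzspan hyspan hzspan
    have heq : z + t • (z - y) = t • (z -ᵥ y) +ᵥ z := by
      rw [vsub_eq_sub, vadd_eq_add]; abel
    rw [heq]; exact h
  set c : ℝ → ↥(affineSpan ℝ H) := fun t => ⟨z + t • (z - y), hmem t⟩ with hc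
  have hcont : Continuous c := by
    refine Continuous.subtype_mk ?_ _
    exact continuous_const.add (continuous_id.smul continuous_const)
  have hc0 : c 0 = z' := by
    apply Subtype.ext
    simp [hc, hz'c]
  have hopen : IsOpen (c ⁻¹' interior ((↑) ⁻¹' H : Set <| affineSpan ℝ H)) :=
    hcont.isOpen_preimage _ isOpen_interior
  have h0 : (0 : ℝ) ∈ c ⁻¹' interior ((↑) ⁻¹' H : Set <| affineSpan ℝ H) := by
    simp only [Set.mem_preimage, hc0]; exact hz'
  obtain ⟨ε, hε, hball⟩ := Metric.isOpen_iff.1 hopen 0 h0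
  have hs : (ε / 2 : ℝ) ∈ Metric.ball (0:ℝ) ε := by
    rw [Metric.mem_ball, Real.dist_eq, sub_zero, abs_of_pos (by linarith)]
    linarith
  have := hball hs
  simp only [Set.mem_preimage] at this
  have h2 := interior_subset this
  refine ⟨ε / 2, by linarith, ?_⟩
  simpa [hc] using h2

theorem face_eq_minFace {C H : Set E} {z : E} (hH : IsExtreme ℝ C H)
    (hz : z ∈ intrinsicInterior ℝ H) : H = minFace C z := by
  have hzH : z ∈ H := intrinsicInterior_subset hz
  apply Set.Subset.antisymm
  · intro y hy
    obtain ⟨s, hs, hsH⟩ := extend_of_mem_intrinsicInterior hz hy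
    exact ⟨hH.1 hy, s, hs, hH.1 hsH⟩
  · exact minFace_min hH hzH

theorem IsExtreme.inter_left {C F A : Set E} (hF : IsExtreme ℝ C F) (hAC : A ⊆ C) :
    IsExtreme ℝ A (A ∩ F) := by
  refine ⟨Set.inter_subset_left, ?_⟩
  rintro x₁ h₁ x₂ h₂ w ⟨hwA, hwF⟩ hseg
  obtain ⟨k₁, k₂⟩ := And.intro (hF.2 (hAC h₁) (hAC h₂) hwF hseg)
    (hF.right_mem_of_mem_openSegment (hAC h₁) (hAC h₂) hwF hseg)
  exact ⟨h₁, k₁⟩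

/-- Main lemma: every nonempty convex extreme subset of a member of the lattice is in
the lattice. -/
theorem ChLat.face {X : Set E} {A : Set E} (hA : ChLat X A) :
    ∀ F : Set E, IsExtreme ℝ A F → Convex ℝ F → F.Nonempty → ChLat X F := by
  induction hA with
  | point x hx =>
    intro F hF hFc hFne
    have hFx : F = {x} := (Set.Nonempty.subset_singleton_iff hFne).1 hF.1
    rw [hFx]
    exact ChLat.point x hx
  | join A B hA hB ihA ihB =>
    intro F hF hFc hFne
    have hAc := hA.convex
    have hBc := hB.convex
    by_cases hAe : A = ∅
    · rw [hAe, Set.empty_union, hBc.convexHull_eq] at hF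
      exact ihB F hF hFc hFne
    by_cases hBe : B = ∅
    · rw [hBe, Set.union_empty, hAc.convexHull_eq] at hF
      exact ihA F hF hFc hFne
    have hAne : A.Nonempty := Set.nonempty_iff_ne_empty.2 hAe
    have hBne : B.Nonempty := Set.nonempty_iff_ne_empty.2 hBe
    have hCJ : convexHull ℝ (A ∪ B) = convexJoin ℝ A B := hAc.convexHull_union hBc hAne hBne
    have hAsub : A ⊆ convexHull ℝ (A ∪ B) :=
      Set.subset_union_left.trans (subset_convexHull ℝ _)
    have hBsub : B ⊆ convexHull ℝ (A ∪ B) :=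
      Set.subset_union_right.trans (subset_convexHull ℝ _)
    have key : F = convexHull ℝ ((A ∩ F) ∪ (B ∩ F)) := by
      apply Set.Subset.antisymm
      · intro y hy
        have hyC : y ∈ convexJoin ℝ A B := by rw [← hCJ]; exact hF.1 hy
        obtain ⟨a, ha, b, hb, hyab⟩ := mem_convexJoin.1 hyC
        by_cases hya : y = a
        · exact subset_convexHull ℝ _ (Set.mem_union_left _ ⟨hya ▸ ha, hy⟩)
        by_cases hyb : y = b
        · exact subset_convexHull ℝ _ (Set.mem_union_right _ ⟨hyb ▸ hb, hy⟩)
        have hyo : y ∈ openSegment ℝ a b :=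
          mem_openSegment_of_ne_left_right (Ne.symm hya) (Ne.symm hyb) hyab
        obtain ⟨haF, hbF⟩ := And.intro (hF.2 (hAsub ha) (hBsub hb) hy hyo)
          (hF.right_mem_of_mem_openSegment (hAsub ha) (hBsub hb) hy hyo)
        have h1 : a ∈ (A ∩ F) ∪ (B ∩ F) := Or.inl ⟨ha, haF⟩
        have h2 : b ∈ (A ∩ F) ∪ (B ∩ F) := Or.inr ⟨hb, hbF⟩
        exact segment_subset_convexHull h1 h2 hyab
      · exact convexHull_min (Set.union_subset
          (Set.inter_subset_right) (Set.inter_subset_right)) hFc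
    by_cases hAFe : (A ∩ F) = ∅
    · rw [hAFe, Set.empty_union] at key
      have hBFc : Convex ℝ (B ∩ F) := hBc.inter hFc
      rw [hBFc.convexHull_eq] at key
      have hBFne : (B ∩ F).Nonempty := by rw [← key]; exact hFne
      rw [key]
      exact ihB _ (hF.inter_left hBsub) hBFc hBFne
    by_cases hBFe : (B ∩ F) = ∅
    · rw [hBFe, Set.union_empty] at key
      have hAFc : Convex ℝ (A ∩ F) := hAc.inter hFc
      rw [hAFc.convexHull_eq] at key
      have hAFne : (A ∩ F).Nonempty := by rw [← key]; exact hFne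
      rw [key]
      exact ihA _ (hF.inter_left hAsub) hAFc hAFne
    rw [key]
    exact ChLat.join _ _
      (ihA _ (hF.inter_left hAsub) (hAc.inter hFc) (Set.nonempty_iff_ne_empty.2 hAFe))
      (ihB _ (hF.inter_left hBsub) (hBc.inter hFc) (Set.nonempty_iff_ne_empty.2 hBFe))
  | meet A B hA hB ihA ihB =>
    intro F hF hFc hFne
    have hAc := hA.convex
    have hBc := hB.convex
    obtain ⟨z, hz⟩ := hFne.intrinsicInterior hFc
    have hzF : z ∈ F := intrinsicInterior_subset hz
    have hzAB : z ∈ A ∩ B := hF.1 hzF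
    rw [face_eq_minFace hF hz, minFace_inter hAc hBc hzAB]
    exact ChLat.meet _ _
      (ihA _ (minFace_isExtreme hAc) (minFace_convex hAc hzAB.1) ⟨z, self_mem_minFace hzAB.1⟩)
      (ihB _ (minFace_isExtreme hBc) (minFace_convex hBc hzAB.2) ⟨z, self_mem_minFace hzAB.2⟩)

end Aux

/-- If `X` is complete (its completion `X̄ = {x | ChLat X {x}}` equals `X`), then
the extreme points of every element of `Lat^d(X)` belong to `X`. -/
theorem stmt3 {d : ℕ} (X : Set (Fin d → ℝ))
    (hcomplete : {x : Fin d → ℝ | ChLat X {x}} = X)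
    (A : Set (Fin d → ℝ)) (hA : ChLat X A) :
    A.extremePoints ℝ ⊆ X := by
  intro v hv
  have hext : IsExtreme ℝ A {v} := isExtreme_singleton.2 hv
  have : ChLat X {v} := hA.face {v} hext (convex_singleton v) (Set.singleton_nonempty v)
  rw [← hcomplete]
  exact this
end

section
/- Let X ⊆ ℝ^d contain at least two distinct points. Then the atoms of Lat^d(X) (ordered by inclusion, with bottom element ∅) are exactly the singletons {x} with x ∈ X̄; in particular the union of all atoms of Lat^d(X) equals the completion X̄. -/
variable {d : ℕ} {X : Set (Fin d → ℝ)}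

lemma chlat_convex {A : Set (Fin d → ℝ)} (h : ChLat X A) : Convex ℝ A := by
  induction h with
  | point x hx => exact convex_singleton x
  | join A B hA hB ihA ihB => exact convex_convexHull ℝ _
  | meet A B hA hB ihA ihB => exact ihA.inter ihB

lemma chlat_hull_finset (S : Finset (Fin d → ℝ)) (hS : S.Nonempty)
    (h : ∀ s ∈ S, ChLat X {s}) : ChLat X (convexHull ℝ (S : Set (Fin d → ℝ))) := by
  induction hS using Finset.Nonempty.cons_induction with
  | singleton a => simpa using h a (by simp)
  | cons a S ha hS ih =>
      have h1 : ChLat X (convexHull ℝ ({a} ∪ convexHull ℝ (S : Set (Fin d → ℝ)))) :=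
        ChLat.join _ _ (h a (by simp)) (ih (fun s hs => h s (by simp [hs])))
      rw [convexHull_convexHull_union_right] at h1
      simpa using h1

lemma mem_hull_of_rep (S : Finset (Fin d → ℝ)) (w : (Fin d → ℝ) → ℝ)
    (h0 : ∀ s ∈ S, 0 ≤ w s) (h1 : ∑ s ∈ S, w s = 1) :
    (∑ s ∈ S, w s • s) ∈ convexHull ℝ (S : Set (Fin d → ℝ)) := by
  have := S.centerMass_mem_convexHull (w := w) h0 (by rw [h1]; norm_num) (z := id)
    (fun i hi => Finset.mem_coe.2 hi)
  rwa [Finset.centerMass_eq_of_sum_1 _ _ h1] at this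

lemma one_side (S : Finset (Fin d → ℝ)) (w δ : (Fin d → ℝ) → ℝ) (v u : Fin d → ℝ)
    (hw : ∀ s ∈ S, 0 < w s) (hw1 : ∑ s ∈ S, w s = 1) (hv : ∑ s ∈ S, w s • s = v)
    (hδ0 : ∑ s ∈ S, δ s = 0) (hδu : ∑ s ∈ S, δ s • s = u) (hu : u ≠ 0) :
    ∃ t₀ : ℝ, 0 < t₀ ∧ (∃ s₀ ∈ S, v + t₀ • u ∈ convexHull ℝ ((S.erase s₀) : Set (Fin d → ℝ)))
      ∧ ∀ t : ℝ, 0 ≤ t → t ≤ t₀ → v + t • u ∈ convexHull ℝ (S : Set (Fin d → ℝ)) := by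
  classical
  set F := S.filter (fun s => δ s < 0) with hF
  have hFne : F.Nonempty := by
    by_contra hne
    rw [Finset.not_nonempty_iff_eq_empty, Finset.filter_eq_empty_iff] at hne
    have hall : ∀ s ∈ S, δ s = 0 := by
      intro s hs
      have h0 : ∀ s ∈ S, 0 ≤ δ s := fun s hs => le_of_not_gt (hne hs)
      exact (Finset.sum_eq_zero_iff_of_nonneg h0).1 hδ0 s hs
    apply hu
    rw [← hδu]
    exact Finset.sum_eq_zero (fun s hs => by rw [hall s hs, zero_smul])
  set t₀ := F.inf' hFne (fun s => w s / (-δ s)) with ht₀def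
  have ht₀pos : 0 < t₀ := by
    rw [ht₀def, Finset.lt_inf'_iff]
    intro s hs
    have hsS : s ∈ S := (Finset.mem_filter.1 hs).1
    have hsneg : δ s < 0 := (Finset.mem_filter.1 hs).2
    exact div_pos (hw s hsS) (by linarith)
  have hnn : ∀ t : ℝ, 0 ≤ t → t ≤ t₀ → ∀ s ∈ S, 0 ≤ w s + t * δ s := by
    intro t ht ht0 s hs
    rcases lt_or_ge (δ s) 0 with hneg | hpos
    · have hmem : s ∈ F := Finset.mem_filter.2 ⟨hs, hneg⟩
      have h1 : t₀ ≤ w s / (-δ s) := Finset.inf'_le _ hmem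
      have h2 : t ≤ w s / (-δ s) := le_trans ht0 h1
      have h3 : t * (-δ s) ≤ w s := (le_div_iff₀ (by linarith : (0:ℝ) < -δ s)).1 h2
      linarith
    · have := hw s hs
      nlinarith
  have hmemall : ∀ t : ℝ, 0 ≤ t → t ≤ t₀ → v + t • u ∈ convexHull ℝ (S : Set (Fin d → ℝ)) := by
    intro t ht ht0
    have hsum : ∑ s ∈ S, (w s + t * δ s) = 1 := by
      rw [Finset.sum_add_distrib, hw1, ← Finset.mul_sum, hδ0, mul_zero, add_zero]
    have hvec : ∑ s ∈ S, (w s + t * δ s) • s = v + t • u := by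
      rw [← hv, ← hδu]
      rw [Finset.smul_sum, ← Finset.sum_add_distrib]
      apply Finset.sum_congr rfl
      intro s hs
      rw [add_smul, mul_smul]
    have := mem_hull_of_rep S (fun s => w s + t * δ s) (hnn t ht ht0) hsum
    rwa [hvec] at this
  refine ⟨t₀, ht₀pos, ?_, hmemall⟩
  obtain ⟨s₀, hs₀F, hs₀eq⟩ := Finset.exists_mem_eq_inf' hFne (fun s => w s / (-δ s))
  have hs₀S : s₀ ∈ S := (Finset.mem_filter.1 hs₀F).1
  have hs₀neg : δ s₀ < 0 := (Finset.mem_filter.1 hs₀F).2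
  have hzero : w s₀ + t₀ * δ s₀ = 0 := by
    have hne : δ s₀ ≠ 0 := ne_of_lt hs₀neg
    have hne' : -δ s₀ ≠ 0 := by simpa using hne
    rw [ht₀def, hs₀eq]
    field_simp
    ring
  refine ⟨s₀, hs₀S, ?_⟩
  have hsum : ∑ s ∈ S.erase s₀, (w s + t₀ * δ s) = 1 := by
    rw [Finset.sum_erase S (f := fun s => w s + t₀ * δ s) hzero]
    rw [Finset.sum_add_distrib, hw1, ← Finset.mul_sum, hδ0, mul_zero, add_zero]
  have hvec : ∑ s ∈ S.erase s₀, (w s + t₀ * δ s) • s = v + t₀ • u := by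
    have h1 : ∑ s ∈ S, (w s + t₀ * δ s) • s = v + t₀ • u := by
      rw [← hv, ← hδu, Finset.smul_sum, ← Finset.sum_add_distrib]
      exact Finset.sum_congr rfl (fun s hs => by rw [add_smul, mul_smul])
    rw [Finset.sum_erase S (f := fun s => (w s + t₀ * δ s) • s)
      (by show (w s₀ + t₀ * δ s₀) • s₀ = 0; rw [hzero, zero_smul] :
        (fun s => (w s + t₀ * δ s) • s) s₀ = 0), h1]
  have hnn' : ∀ s ∈ S.erase s₀, 0 ≤ w s + t₀ * δ s :=
    fun s hs => hnn t₀ ht₀pos.le le_rfl s (Finset.mem_of_mem_erase hs)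
  have := mem_hull_of_rep (S.erase s₀) (fun s => w s + t₀ * δ s) hnn' hsum
  rwa [hvec] at this

lemma key_claim (X : Set (Fin d → ℝ)) :
    ∀ n : ℕ, ∀ S T : Finset (Fin d → ℝ), S.card + T.card ≤ n →
    (∀ s ∈ S, ChLat X {s}) → (∀ t ∈ T, ChLat X {t}) →
    ∀ v : Fin d → ℝ, v ∈ convexHull ℝ (S : Set (Fin d → ℝ)) →
      v ∈ convexHull ℝ (T : Set (Fin d → ℝ)) →
    v ∈ convexHull ℝ {x : Fin d → ℝ | ChLat X {x} ∧
        x ∈ convexHull ℝ (S : Set (Fin d → ℝ)) ∧ x ∈ convexHull ℝ (T : Set (Fin d → ℝ))} := by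
  intro n
  induction n with
  | zero =>
    intro S T hcard _ _ v hvS hvT
    have : S = ∅ := Finset.card_eq_zero.1 (by omega)
    subst this
    simp at hvS
  | succ n ih =>
    intro S T hcard hS hT v hvS hvT
    classical
    -- monotonicity of the target in (S, T)
    have mono : ∀ S' T' : Finset (Fin d → ℝ), S' ⊆ S → T' ⊆ T →
        convexHull ℝ {x : Fin d → ℝ | ChLat X {x} ∧
          x ∈ convexHull ℝ (S' : Set (Fin d → ℝ)) ∧ x ∈ convexHull ℝ (T' : Set (Fin d → ℝ))} ⊆
        convexHull ℝ {x : Fin d → ℝ | ChLat X {x} ∧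
          x ∈ convexHull ℝ (S : Set (Fin d → ℝ)) ∧ x ∈ convexHull ℝ (T : Set (Fin d → ℝ))} := by
      intro S' T' h1 h2
      apply convexHull_mono
      rintro x ⟨hx1, hx2, hx3⟩
      exact ⟨hx1, convexHull_mono (by exact_mod_cast h1) hx2,
        convexHull_mono (by exact_mod_cast h2) hx3⟩
    -- extract representations
    rw [Finset.convexHull_eq, Set.mem_setOf_eq] at hvS hvT
    obtain ⟨wS, hwS0, hwS1, hvSeq⟩ := hvS
    obtain ⟨wT, hwT0, hwT1, hvTeq⟩ := hvT
    rw [Finset.centerMass_eq_of_sum_1 _ _ hwS1] at hvSeq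
    rw [Finset.centerMass_eq_of_sum_1 _ _ hwT1] at hvTeq
    simp only [id_eq] at hvSeq hvTeq
    have hvS : v ∈ convexHull ℝ (S : Set (Fin d → ℝ)) := by
      rw [← hvSeq]; exact mem_hull_of_rep S wS hwS0 hwS1
    have hvT : v ∈ convexHull ℝ (T : Set (Fin d → ℝ)) := by
      rw [← hvTeq]; exact mem_hull_of_rep T wT hwT0 hwT1
    -- if some S-coefficient vanishes, drop the point and use the IH
    by_cases hzS : ∃ s₀ ∈ S, wS s₀ = 0
    · obtain ⟨s₀, hs₀, hw0⟩ := hzS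
      have hvS' : v ∈ convexHull ℝ ((S.erase s₀ : Finset (Fin d → ℝ)) : Set (Fin d → ℝ)) := by
        have hsum : ∑ s ∈ S.erase s₀, wS s = 1 := by
          rw [Finset.sum_erase S (f := wS) hw0, hwS1]
        have hvec : ∑ s ∈ S.erase s₀, wS s • s = v := by
          rw [Finset.sum_erase S (f := fun s => wS s • s)
            (by show wS s₀ • s₀ = 0; rw [hw0, zero_smul] : (fun s => wS s • s) s₀ = 0), hvSeq]
        rw [← hvec]
        exact mem_hull_of_rep _ wS (fun s hs => hwS0 s (Finset.mem_of_mem_erase hs)) hsum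
      have hcard' : (S.erase s₀).card + T.card ≤ n := by
        have h1 := Finset.card_erase_of_mem hs₀
        have h2 : 0 < S.card := Finset.card_pos.2 ⟨s₀, hs₀⟩
        omega
      exact mono _ _ (Finset.erase_subset _ _) subset_rfl
        (ih (S.erase s₀) T hcard' (fun s hs => hS s (Finset.mem_of_mem_erase hs)) hT v hvS' hvT)
    by_cases hzT : ∃ t₀ ∈ T, wT t₀ = 0
    · obtain ⟨t₀, ht₀, hw0⟩ := hzT
      have hvT' : v ∈ convexHull ℝ ((T.erase t₀ : Finset (Fin d → ℝ)) : Set (Fin d → ℝ)) := by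
        have hsum : ∑ s ∈ T.erase t₀, wT s = 1 := by
          rw [Finset.sum_erase T (f := wT) hw0, hwT1]
        have hvec : ∑ s ∈ T.erase t₀, wT s • s = v := by
          rw [Finset.sum_erase T (f := fun s => wT s • s)
            (by show wT t₀ • t₀ = 0; rw [hw0, zero_smul] : (fun s => wT s • s) t₀ = 0), hvTeq]
        rw [← hvec]
        exact mem_hull_of_rep _ wT (fun s hs => hwT0 s (Finset.mem_of_mem_erase hs)) hsum
      have hcard' : S.card + (T.erase t₀).card ≤ n := by
        have h1 := Finset.card_erase_of_mem ht₀
        have h2 : 0 < T.card := Finset.card_pos.2 ⟨t₀, ht₀⟩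
        omega
      exact mono _ _ subset_rfl (Finset.erase_subset _ _)
        (ih S (T.erase t₀) hcard' hS (fun s hs => hT s (Finset.mem_of_mem_erase hs)) v hvS hvT')
    push_neg at hzS hzT
    have hwSpos : ∀ s ∈ S, 0 < wS s := fun s hs => lt_of_le_of_ne (hwS0 s hs) (Ne.symm (hzS s hs))
    have hwTpos : ∀ s ∈ T, 0 < wT s := fun s hs => lt_of_le_of_ne (hwT0 s hs) (Ne.symm (hzT s hs))
    by_cases hu : ∃ u : Fin d → ℝ, u ≠ 0 ∧
        (∃ δ : (Fin d → ℝ) → ℝ, ∑ s ∈ S, δ s = 0 ∧ ∑ s ∈ S, δ s • s = u) ∧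
        (∃ ε : (Fin d → ℝ) → ℝ, ∑ t ∈ T, ε t = 0 ∧ ∑ t ∈ T, ε t • t = u)
    · obtain ⟨u, hu0, ⟨δ, hδ0, hδu⟩, ⟨ε, hε0, hεu⟩⟩ := hu
      -- in a given direction we can move to a point covered by the IH
      have step : ∀ (u' : Fin d → ℝ) (δ' ε' : (Fin d → ℝ) → ℝ), u' ≠ 0 →
          (∑ s ∈ S, δ' s = 0) → (∑ s ∈ S, δ' s • s = u') →
          (∑ t ∈ T, ε' t = 0) → (∑ t ∈ T, ε' t • t = u') →
          ∃ t : ℝ, 0 < t ∧ v + t • u' ∈ convexHull ℝ {x : Fin d → ℝ | ChLat X {x} ∧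
            x ∈ convexHull ℝ (S : Set (Fin d → ℝ)) ∧ x ∈ convexHull ℝ (T : Set (Fin d → ℝ))} := by
        intro u' δ' ε' hu0' hδ0' hδu' hε0' hεu'
        obtain ⟨tS, htSpos, ⟨s₀, hs₀S, hmemS⟩, hallS⟩ :=
          one_side S wS δ' v u' hwSpos hwS1 hvSeq hδ0' hδu' hu0'
        obtain ⟨tT, htTpos, ⟨t₀, ht₀T, hmemT⟩, hallT⟩ :=
          one_side T wT ε' v u' hwTpos hwT1 hvTeq hε0' hεu' hu0'
        rcases le_total tS tT with hle | hle
        · refine ⟨tS, htSpos, ?_⟩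
          have hcard' : (S.erase s₀).card + T.card ≤ n := by
            have h1 := Finset.card_erase_of_mem hs₀S
            have h2 : 0 < S.card := Finset.card_pos.2 ⟨s₀, hs₀S⟩
            omega
          exact mono _ _ (Finset.erase_subset _ _) subset_rfl
            (ih (S.erase s₀) T hcard' (fun s hs => hS s (Finset.mem_of_mem_erase hs)) hT
              (v + tS • u') hmemS (hallT tS htSpos.le hle))
        · refine ⟨tT, htTpos, ?_⟩
          have hcard' : S.card + (T.erase t₀).card ≤ n := by
            have h1 := Finset.card_erase_of_mem ht₀T
            have h2 : 0 < T.card := Finset.card_pos.2 ⟨t₀, ht₀T⟩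
            omega
          exact mono _ _ subset_rfl (Finset.erase_subset _ _)
            (ih S (T.erase t₀) hcard' hS (fun s hs => hT s (Finset.mem_of_mem_erase hs))
              (v + tT • u') (hallS tT htTpos.le hle) hmemT)
      obtain ⟨tp, htp, hwp⟩ := step u δ ε hu0 hδ0 hδu hε0 hεu
      obtain ⟨tm, htm, hwm⟩ := step (-u) (fun s => -δ s) (fun t => -ε t) (neg_ne_zero.2 hu0)
        (by simp [hδ0]) (by simp only [neg_smul, Finset.sum_neg_distrib, hδu])
        (by simp [hε0]) (by simp only [neg_smul, Finset.sum_neg_distrib, hεu])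
      have hne : tp + tm ≠ 0 := by positivity
      have hcomb : v = (tm / (tp + tm)) • (v + tp • u) + (tp / (tp + tm)) • (v + tm • (-u)) := by
        match_scalars <;> field_simp <;> ring
      rw [hcomb]
      exact (convex_convexHull ℝ _) hwp hwm (by positivity) (by positivity)
        (by rw [← add_div, add_comm tm tp, div_self hne])
    · -- no common nonzero direction: conv S ∩ conv T = {v}, so {v} is a lattice element
      have hSne : S.Nonempty := by
        rcases S.eq_empty_or_nonempty with h | h
        · subst h; simp at hvS
        · exact h
      have hTne : T.Nonempty := by
        rcases T.eq_empty_or_nonempty with h | h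
        · subst h; simp at hvT
        · exact h
      have hsingle : ({v} : Set (Fin d → ℝ)) =
          convexHull ℝ (S : Set (Fin d → ℝ)) ∩ convexHull ℝ (T : Set (Fin d → ℝ)) := by
        apply Set.eq_of_subset_of_subset
        · rintro x rfl; exact ⟨hvS, hvT⟩
        · rintro x ⟨hxS, hxT⟩
          rw [Finset.convexHull_eq, Set.mem_setOf_eq] at hxS hxT
          obtain ⟨aS, haS0, haS1, hxSeq⟩ := hxS
          obtain ⟨aT, haT0, haT1, hxTeq⟩ := hxT
          rw [Finset.centerMass_eq_of_sum_1 _ _ haS1] at hxSeq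
          rw [Finset.centerMass_eq_of_sum_1 _ _ haT1] at hxTeq
          simp only [id_eq] at hxSeq hxTeq
          by_contra hne
          rw [Set.mem_singleton_iff] at hne
          apply hu
          refine ⟨x - v, sub_ne_zero.2 hne, ⟨fun s => aS s - wS s, ?_, ?_⟩,
            ⟨fun t => aT t - wT t, ?_, ?_⟩⟩
          · rw [Finset.sum_sub_distrib, haS1, hwS1, sub_self]
          · rw [← hxSeq, ← hvSeq]
            rw [← Finset.sum_sub_distrib]
            exact Finset.sum_congr rfl (fun s hs => by rw [sub_smul])
          · rw [Finset.sum_sub_distrib, haT1, hwT1, sub_self]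
          · rw [← hxTeq, ← hvTeq]
            rw [← Finset.sum_sub_distrib]
            exact Finset.sum_congr rfl (fun s hs => by rw [sub_smul])
      have hvlat : ChLat X {v} := by
        rw [hsingle]
        exact ChLat.meet _ _ (chlat_hull_finset S hSne hS) (chlat_hull_finset T hTne hT)
      exact subset_convexHull ℝ _ ⟨hvlat, hvS, hvT⟩

lemma chlat_hull_points {A : Set (Fin d → ℝ)} (h : ChLat X A) :
    A ⊆ convexHull ℝ {x : Fin d → ℝ | ChLat X {x} ∧ x ∈ A} := by
  induction h with
  | point x hx =>
      intro y hy
      rw [Set.mem_singleton_iff] at hy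
      subst hy
      exact subset_convexHull ℝ _ ⟨ChLat.point _ hx, rfl⟩
  | join A B hA hB ihA ihB =>
      apply convexHull_min _ (convex_convexHull ℝ _)
      apply Set.union_subset
      · refine ihA.trans (convexHull_mono ?_)
        rintro x ⟨h1, h2⟩
        exact ⟨h1, subset_convexHull ℝ _ (Set.mem_union_left _ h2)⟩
      · refine ihB.trans (convexHull_mono ?_)
        rintro x ⟨h1, h2⟩
        exact ⟨h1, subset_convexHull ℝ _ (Set.mem_union_right _ h2)⟩
  | meet A B hA hB ihA ihB =>
      intro v hv
      have hvA := ihA hv.1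
      have hvB := ihB hv.2
      rw [convexHull_eq_union_convexHull_finite_subsets] at hvA hvB
      simp only [Set.mem_iUnion] at hvA hvB
      obtain ⟨S, hSsub, hvS⟩ := hvA
      obtain ⟨T, hTsub, hvT⟩ := hvB
      have hS : ∀ s ∈ S, ChLat X {s} := fun s hs => (hSsub hs).1
      have hT : ∀ t ∈ T, ChLat X {t} := fun t ht => (hTsub ht).1
      have hkey := key_claim X (S.card + T.card) S T le_rfl hS hT v hvS hvT
      refine convexHull_mono ?_ hkey
      rintro x ⟨h1, h2, h3⟩
      have hSA : convexHull ℝ (S : Set (Fin d → ℝ)) ⊆ A :=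
        convexHull_min (fun s hs => (hSsub hs).2) (chlat_convex hA)
      have hTB : convexHull ℝ (T : Set (Fin d → ℝ)) ⊆ B :=
        convexHull_min (fun t ht => (hTsub ht).2) (chlat_convex hB)
      exact ⟨h1, hSA h2, hTB h3⟩

/-- `a` is an atom of `Lat^d(X)`: a nonempty element of the lattice such that the only
elements of the lattice below it are `∅` (the bottom) and `a` itself. -/
def ChAtom {d : ℕ} (X : Set (Fin d → ℝ)) (a : Set (Fin d → ℝ)) : Prop :=
  ChLat X a ∧ a ≠ ∅ ∧ ∀ B, ChLat X B → B ⊆ a → B = ∅ ∨ B = a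

/-- If `X` contains two distinct points, the atoms of `Lat^d(X)` are exactly the
singletons `{x}` with `x` in the completion `X̄ = {x | {x} ∈ Lat^d(X)}`; in particular
the union of all atoms equals `X̄`. -/
theorem stmt6 {d : ℕ} (X : Set (Fin d → ℝ))
    (h2 : ∃ x ∈ X, ∃ y ∈ X, x ≠ y) :
    (∀ a : Set (Fin d → ℝ), ChAtom X a ↔ ∃ x : Fin d → ℝ, ChLat X {x} ∧ a = {x}) ∧
    ⋃₀ {a : Set (Fin d → ℝ) | ChAtom X a} = {x : Fin d → ℝ | ChLat X {x}} := by
  have hiff : ∀ a : Set (Fin d → ℝ), ChAtom X a ↔ ∃ x : Fin d → ℝ, ChLat X {x} ∧ a = {x} := by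
    intro a
    constructor
    · rintro ⟨hlat, hne, hmin⟩
      obtain ⟨p, hp⟩ := Set.nonempty_iff_ne_empty.2 hne
      have hsub := chlat_hull_points hlat hp
      have hne2 : {x : Fin d → ℝ | ChLat X {x} ∧ x ∈ a}.Nonempty := by
        by_contra hcon
        rw [Set.not_nonempty_iff_eq_empty] at hcon
        rw [hcon, convexHull_empty] at hsub
        exact hsub
      obtain ⟨x, hxlat, hxa⟩ := hne2
      rcases hmin {x} hxlat (Set.singleton_subset_iff.2 hxa) with h | h
      · exact absurd h (Set.singleton_ne_empty x)
      · exact ⟨x, hxlat, h.symm⟩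
    · rintro ⟨x, hxlat, rfl⟩
      refine ⟨hxlat, Set.singleton_ne_empty x, fun B _ hB => ?_⟩
      rcases Set.subset_singleton_iff_eq.1 hB with h | h
      · exact Or.inl h
      · exact Or.inr h
  refine ⟨hiff, ?_⟩
  ext z
  simp only [Set.mem_sUnion, Set.mem_setOf_eq]
  constructor
  · rintro ⟨a, ha, hza⟩
    obtain ⟨x, hxlat, rfl⟩ := (hiff a).1 ha
    rw [Set.mem_singleton_iff] at hza
    subst hza
    exact hxlat
  · intro hz
    exact ⟨{z}, (hiff {z}).2 ⟨z, hz, rfl⟩, rfl⟩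
end

section
/- For every X ⊆ ℝ^d, the lattice Lat^d(X) is finite if and only if the completion X̄ is finite (i.e., X is finitely completable). -/
open Set

namespace Stmt8Aux

variable {d : ℕ} {X : Set (Fin d → ℝ)}

/-- The minimal face of `A` at `v` (as a point set). -/
def face (A : Set (Fin d → ℝ)) (v : Fin d → ℝ) : Set (Fin d → ℝ) :=
  {x | x ∈ A ∧ ∃ y ∈ A, ∃ s : ℝ, 0 < s ∧ s ≤ 1 ∧ v = s • x + (1 - s) • y}

theorem face_subset {A : Set (Fin d → ℝ)} {v : Fin d → ℝ} : face A v ⊆ A := fun _ h => h.1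

theorem mem_face_self {A : Set (Fin d → ℝ)} {v : Fin d → ℝ} (hv : v ∈ A) : v ∈ face A v :=
  ⟨hv, v, hv, 1, one_pos, le_refl 1, by simp⟩

theorem aux_eq {A B : Set (Fin d → ℝ)} {v x : Fin d → ℝ}
    (hv : v ∈ (A ∩ B).extremePoints ℝ) (hB : Convex ℝ B)
    (hxA : x ∈ A) (hxB : x ∈ B)
    {yA yB : Fin d → ℝ} (hyA : yA ∈ A) (hyB : yB ∈ B)
    {s t : ℝ} (hs0 : 0 < s) (hs1 : s ≤ 1) (ht0 : 0 < t) (ht1 : t ≤ 1) (hst : s ≤ t)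
    (hvA : v = s • x + (1 - s) • yA) (hvB : v = t • x + (1 - t) • yB) : x = v := by
  rcases eq_or_lt_of_le hs1 with h1 | h1
  · -- s = 1 : v = x
    rw [hvA, h1]; module
  · -- s < 1
    have h1s : (0:ℝ) < 1 - s := by linarith
    set z : Fin d → ℝ := ((t - s) / (1 - s)) • x + ((1 - t) / (1 - s)) • yB with hz
    have hzB : z ∈ B := by
      refine hB hxB hyB (div_nonneg (by linarith) h1s.le) (div_nonneg (by linarith) h1s.le) ?_
      rw [← add_div, div_eq_one_iff_eq h1s.ne']; ring
    have heq : s • x + (1 - s) • z = v := by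
      rw [hvB, hz]; match_scalars <;> field_simp <;> ring
    have hyz : yA = z := by
      have h2 : s • x + (1 - s) • yA = s • x + (1 - s) • z := hvA.symm.trans heq.symm
      exact smul_right_injective _ h1s.ne' (add_left_cancel h2)
    have hyAB : yA ∈ A ∩ B := ⟨hyA, hyz ▸ hzB⟩
    exact (hv.2 ⟨hxA, hxB⟩ hyAB ⟨s, 1 - s, hs0, h1s, by ring, hvA.symm⟩)

theorem convex_face {A : Set (Fin d → ℝ)} {v : Fin d → ℝ} (hA : Convex ℝ A) :
    Convex ℝ (face A v) := by
  rintro x₁ ⟨hx₁, y₁, hy₁, s₁, hs₁0, hs₁1, hv₁⟩ x₂ ⟨hx₂, y₂, hy₂, s₂, hs₂0, hs₂1, hv₂⟩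
    c₁ c₂ hc₁ hc₂ hc
  have hxA : c₁ • x₁ + c₂ • x₂ ∈ A := hA hx₁ hx₂ hc₁ hc₂ hc
  refine ⟨hxA, ?_⟩
  have hD0 : 0 < c₁ * s₂ + c₂ * s₁ := by
    rcases eq_or_lt_of_le hc₁ with h | h
    · have h2 : c₂ = 1 := by linarith
      rw [← h, h2]; simpa using hs₁0
    · nlinarith [mul_nonneg hc₂ hs₁0.le]
  set D : ℝ := c₁ * s₂ + c₂ * s₁ with hD
  set l : ℝ := s₁ * s₂ / D with hl
  have hl0 : 0 < l := by positivity
  have hl1 : l ≤ 1 := by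
    rw [hl, div_le_one hD0]
    nlinarith [mul_nonneg hc₁ (mul_nonneg hs₂0.le (sub_nonneg.2 hs₁1)),
      mul_nonneg hc₂ (mul_nonneg hs₁0.le (sub_nonneg.2 hs₂1))]
  set α : ℝ := c₁ * s₂ / D with hα
  have hα0 : 0 ≤ α := by positivity
  have hα1 : α ≤ 1 := by
    rw [hα, div_le_one hD0]; nlinarith [mul_nonneg hc₂ hs₁0.le]
  set a : ℝ := α * (1 - s₁) with ha'
  set b : ℝ := (1 - α) * (1 - s₂) with hb'
  have ha : 0 ≤ a := mul_nonneg hα0 (by linarith)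
  have hb : 0 ≤ b := mul_nonneg (by linarith) (by linarith)
  have hab : a + b = 1 - l := by
    rw [ha', hb', hα, hl]; field_simp; try linear_combination (-(s₂*s₁))*hc
  have hvx : v = l • (c₁ • x₁ + c₂ • x₂) + (a • y₁ + b • y₂) := by
    have hv' : v = α • v + (1 - α) • v := by rw [← add_smul]; simp
    rw [hv']
    nth_rewrite 1 [hv₁]
    nth_rewrite 1 [hv₂]
    have hDne : c₁ * s₂ + c₂ * s₁ ≠ 0 := hD0.ne'
    rw [ha', hb', hα, hl, hD]
    match_scalars <;> field_simp <;> ring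
  rcases eq_or_lt_of_le hl1 with hle | hlt
  · -- l = 1 : then v = c₁ • x₁ + c₂ • x₂
    have ha0 : a = 0 := by linarith
    have hb0 : b = 0 := by linarith
    refine ⟨c₁ • x₁ + c₂ • x₂, hxA, 1, one_pos, le_refl 1, ?_⟩
    rw [hvx, ha0, hb0, hle]; module
  · have h1l : (0:ℝ) < 1 - l := by linarith
    have hyA : (a / (1 - l)) • y₁ + (b / (1 - l)) • y₂ ∈ A := by
      refine hA hy₁ hy₂ (div_nonneg ha h1l.le) (div_nonneg hb h1l.le) ?_
      rw [← add_div, hab, div_self h1l.ne']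
    refine ⟨_, hyA, l, hl0, hl1, ?_⟩
    rw [hvx]
    congr 1
    match_scalars <;> (field_simp)

theorem isExtreme_face {A : Set (Fin d → ℝ)} {v : Fin d → ℝ} (hA : Convex ℝ A) :
    IsExtreme ℝ A (face A v) := by
  refine ⟨face_subset, ?_⟩
  rintro p hp q hq x ⟨hxA, y, hy, s, hs0, hs1, hv⟩ ⟨t, t', ht, ht', htt, hx⟩
  have key : ∀ p q : Fin d → ℝ, p ∈ A → q ∈ A → ∀ t t' : ℝ, 0 < t → 0 < t' → t + t' = 1 →
      t • p + t' • q = x → p ∈ face A v := by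
    intro p q hp hq t t' ht ht' htt hx
    have hst : s * t < 1 := by nlinarith
    have hst0 : 0 < s * t := by positivity
    have h1 : (0:ℝ) < 1 - s * t := by linarith
    have hzA : (s * t' / (1 - s * t)) • q + ((1 - s) / (1 - s * t)) • y ∈ A := by
      refine hA hq hy (by positivity) (div_nonneg (by linarith) h1.le) ?_
      rw [← add_div, div_eq_one_iff_eq h1.ne']; nlinarith
    refine ⟨hp, _, hzA, s * t, hst0, hst.le, ?_⟩
    rw [hv, ← hx]
    match_scalars <;> field_simp <;> ring
  exact key p q hp hq t t' ht ht' htt hx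


theorem face_inter_face {A B : Set (Fin d → ℝ)} {v : Fin d → ℝ}
    (hA : Convex ℝ A) (hB : Convex ℝ B) (hv : v ∈ (A ∩ B).extremePoints ℝ) :
    face A v ∩ face B v = {v} := by
  apply Subset.antisymm
  · rintro x ⟨⟨hxA, yA, hyA, s, hs0, hs1, hvA⟩, hxB, yB, hyB, t, ht0, ht1, hvB⟩
    rcases le_total s t with hst | hst
    · exact aux_eq hv hB hxA hxB hyA hyB hs0 hs1 ht0 ht1 hst hvA hvB
    · have hv' : v ∈ (B ∩ A).extremePoints ℝ := by rwa [inter_comm]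
      exact aux_eq hv' hA hxB hxA hyB hyA ht0 ht1 hs0 hs1 hst hvB hvA
  · rintro x (rfl : x = v)
    exact ⟨mem_face_self hv.1.1, mem_face_self hv.1.2⟩

theorem face_eq_convexHull {S A : Set (Fin d → ℝ)} (hS : S.Finite)
    (hAS : A = convexHull ℝ S) (v : Fin d → ℝ) :
    face A v = convexHull ℝ (face A v ∩ S) := by
  have hA : Convex ℝ A := hAS ▸ convex_convexHull ℝ S
  apply Subset.antisymm
  · intro x hx
    have hxA : x ∈ convexHull ℝ (↑hS.toFinset : Set (Fin d → ℝ)) := by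
      rw [hS.coe_toFinset, ← hAS]; exact hx.1
    set T := hS.toFinset with hT
    rw [Finset.convexHull_eq, Set.mem_setOf_eq] at hxA
    obtain ⟨w, hw0, hw1, hwx⟩ := hxA
    have hwx' : ∑ t ∈ T, w t • t = x := by
      rw [← hwx, Finset.centerMass_eq_of_sum_1 _ _ hw1]; simp
    -- every point of `T` with positive weight lies in the face
    have claim : ∀ y ∈ T, 0 < w y → y ∈ face A v ∩ S := by
      intro y hyT hwy
      have hyS : y ∈ S := by rwa [hT, Set.Finite.mem_toFinset] at hyT
      have hyA : y ∈ A := by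
        rw [hAS]; exact subset_convexHull ℝ S hyS
      have hwy1 : w y ≤ 1 := by
        calc w y = w y + 0 := (add_zero _).symm
        _ ≤ w y + ∑ t ∈ T.erase y, w t := by
            gcongr
            exact Finset.sum_nonneg fun t ht => hw0 t (Finset.mem_of_mem_erase ht)
        _ = 1 := by rw [Finset.add_sum_erase _ _ hyT, hw1]
      refine ⟨?_, hyS⟩
      rcases eq_or_lt_of_le hwy1 with h1 | h1
      · -- w y = 1 : x = y
        have hz : ∀ t ∈ T.erase y, w t = 0 := by
          intro t ht
          by_contra hne
          have h2 : 0 < w t := lt_of_le_of_ne (hw0 t (Finset.mem_of_mem_erase ht)) (Ne.symm hne)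
          have h3 : w t + ∑ u ∈ (T.erase y).erase t, w u = ∑ u ∈ T.erase y, w u :=
            Finset.add_sum_erase _ _ ht
          have h4 : w y + ∑ u ∈ T.erase y, w u = 1 := by rw [Finset.add_sum_erase _ _ hyT, hw1]
          have h5 : 0 ≤ ∑ u ∈ (T.erase y).erase t, w u :=
            Finset.sum_nonneg fun u hu =>
              hw0 u (Finset.mem_of_mem_erase (Finset.mem_of_mem_erase hu))
          linarith
        have hx_eq : x = y := by
          rw [← hwx', ← Finset.add_sum_erase _ _ hyT]
          have h6 : ∀ t ∈ T.erase y, w t • t = (0 : Fin d → ℝ) := by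
            intro t ht; rw [hz t ht, zero_smul]
          rw [Finset.sum_congr rfl h6, Finset.sum_const_zero, add_zero, h1, one_smul]
        rw [hx_eq] at hx; exact hx
      · -- 0 < w y < 1
        have hu : (0:ℝ) < 1 - w y := by linarith
        set z : Fin d → ℝ := (1 - w y)⁻¹ • (x - w y • y) with hzdef
        have hzA : z ∈ A := by
          rw [hAS, ← hS.coe_toFinset]
          refine Finset.mem_convexHull'.2
            ⟨fun t => if t = y then 0 else w t / (1 - w y), ?_, ?_, ?_⟩
          · intro t htT
            by_cases h : t = y <;> simp [h, div_nonneg (hw0 t htT) hu.le]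
          · rw [← Finset.add_sum_erase _ _ hyT]
            beta_reduce
            rw [if_pos rfl, zero_add]
            have e0 : ∀ t ∈ T.erase y, (if t = y then (0:ℝ) else w t / (1 - w y))
                = w t / (1 - w y) := by
              intro t ht; rw [if_neg (Finset.ne_of_mem_erase ht)]
            rw [Finset.sum_congr rfl e0, ← Finset.sum_div, div_eq_one_iff_eq hu.ne']
            have h4 : w y + ∑ u ∈ T.erase y, w u = 1 := by rw [Finset.add_sum_erase _ _ hyT, hw1]
            linarith
          · rw [← Finset.add_sum_erase _ _ hyT]
            beta_reduce
            rw [if_pos rfl, zero_smul, zero_add]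
            have e1 : ∀ t ∈ T.erase y, (if t = y then (0:ℝ) else w t / (1 - w y)) • t
                = (1 - w y)⁻¹ • (w t • t) := by
              intro t ht
              rw [if_neg (Finset.ne_of_mem_erase ht), div_eq_inv_mul, mul_smul]
            rw [Finset.sum_congr rfl e1, ← Finset.smul_sum]
            have e2 : ∑ t ∈ T.erase y, w t • t = x - w y • y := by
              have h3 := Finset.add_sum_erase T (fun t => w t • t) hyT
              rw [hwx'] at h3
              exact eq_sub_of_add_eq' h3
            rw [e2, hzdef]
        have hxeq : x = w y • y + (1 - w y) • z := by
          rw [hzdef, smul_inv_smul₀ hu.ne']; module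
        exact ((isExtreme_face hA).2 hyA hzA hx
          ⟨w y, 1 - w y, hwy, hu, by ring, hxeq.symm⟩)
    -- conclude
    rw [← hwx, ← Finset.centerMass_filter_ne_zero]
    refine Finset.centerMass_mem_convexHull _ (fun i hi => hw0 i (Finset.mem_of_mem_filter i hi))
      ?_ ?_
    · rw [Finset.sum_filter_ne_zero, hw1]; exact one_pos
    · intro i hi
      obtain ⟨hiT, hiw⟩ := Finset.mem_filter.1 hi
      exact claim i hiT (lt_of_le_of_ne (hw0 i hiT) (Ne.symm hiw))
  · exact convexHull_min inter_subset_left (convex_face hA)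


/-- An extreme point of a subset that lies in the subset is extreme there. -/
theorem mem_extremePoints_of_subset {s t : Set (Fin d → ℝ)} {v : Fin d → ℝ}
    (hv : v ∈ t.extremePoints ℝ) (hvs : v ∈ s) (hst : s ⊆ t) : v ∈ s.extremePoints ℝ :=
  ⟨hvs, fun _ h1 _ h2 h => hv.2 (hst h1) (hst h2) h⟩

/-- The convex hull of a finite nonempty set of completable points is in the lattice. -/
theorem chLat_convexHull_finset : ∀ (T : Finset (Fin d → ℝ)), T.Nonempty →
    (∀ x ∈ T, ChLat X {x}) → ChLat X (convexHull ℝ (T : Set (Fin d → ℝ))) := by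
  intro T hne
  induction hne using Finset.Nonempty.cons_induction with
  | singleton a => intro h; simpa [convexHull_singleton] using h a (by simp)
  | cons a T haT hTne ih =>
    intro h
    have h1 : ChLat X {a} := h a (Finset.mem_cons_self a T)
    have h2 := ih (fun x hx => h x (Finset.mem_cons_of_mem hx))
    have h3 := ChLat.join _ _ h1 h2
    have e : convexHull ℝ ({a} ∪ convexHull ℝ (T : Set (Fin d → ℝ)))
        = convexHull ℝ ((Finset.cons a T haT : Finset (Fin d → ℝ)) : Set (Fin d → ℝ)) := by
      rw [convexHull_convexHull_union_right]
      congr 1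
      rw [Finset.coe_cons, Set.insert_eq]
    rwa [e] at h3

theorem chLat_convexHull_of_finite {S : Set (Fin d → ℝ)} (hS : S.Finite) (hne : S.Nonempty)
    (h : ∀ x ∈ S, ChLat X {x}) : ChLat X (convexHull ℝ S) := by
  obtain ⟨T, rfl⟩ : ∃ T : Finset (Fin d → ℝ), (T : Set (Fin d → ℝ)) = S :=
    ⟨hS.toFinset, hS.coe_toFinset⟩
  exact chLat_convexHull_finset T (by exact_mod_cast hne) (fun x hx => h x (by exact_mod_cast hx))

/-- Key invariant: if the completion is finite, every lattice element is the convex hull of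
its extreme points, all of which are completable. -/
theorem key (hfin : {x : Fin d → ℝ | ChLat X {x}}.Finite) {A : Set (Fin d → ℝ)}
    (hA : ChLat X A) :
    A.extremePoints ℝ ⊆ {x | ChLat X {x}} ∧ A = convexHull ℝ (A.extremePoints ℝ)
      ∧ Convex ℝ A ∧ IsCompact A := by
  induction hA with
  | point x hx =>
    refine ⟨?_, ?_, convex_singleton x, isCompact_singleton⟩
    · rw [extremePoints_singleton]; exact singleton_subset_iff.2 (ChLat.point x hx)
    · rw [extremePoints_singleton, convexHull_singleton]
  | join A B hA hB ihA ihB =>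
    obtain ⟨hA1, hA2, hA3, hA4⟩ := ihA
    obtain ⟨hB1, hB2, hB3, hB4⟩ := ihB
    set C := convexHull ℝ (A ∪ B) with hC
    have hCconv : Convex ℝ C := convex_convexHull ℝ _
    have hC4 : IsCompact C := by
      have e : C = convexHull ℝ (A.extremePoints ℝ ∪ B.extremePoints ℝ) := by
        rw [hC]
        nth_rewrite 1 [hA2, hB2]
        rw [convexHull_convexHull_union_left, convexHull_convexHull_union_right]
      rw [e]
      exact ((hfin.subset hA1).union (hfin.subset hB1)).isCompact_convexHull ℝ
    have hsub : C.extremePoints ℝ ⊆ {x | ChLat X {x}} := by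
      intro v hv
      rcases extremePoints_convexHull_subset hv with h | h
      · exact hA1 (mem_extremePoints_of_subset hv h
          (subset_union_left.trans (subset_convexHull ℝ _)))
      · exact hB1 (mem_extremePoints_of_subset hv h
          (subset_union_right.trans (subset_convexHull ℝ _)))
    have heq : closure (convexHull ℝ (C.extremePoints ℝ)) = C :=
      closure_convexHull_extremePoints hC4 hCconv
    rw [((hfin.subset hsub).isClosed_convexHull ℝ).closure_eq] at heq
    exact ⟨hsub, heq.symm, hCconv, hC4⟩
  | meet A B hA hB ihA ihB =>
    obtain ⟨hA1, hA2, hA3, hA4⟩ := ihA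
    obtain ⟨hB1, hB2, hB3, hB4⟩ := ihB
    have hCconv : Convex ℝ (A ∩ B) := hA3.inter hB3
    have hC4 : IsCompact (A ∩ B) := hA4.inter_right hB4.isClosed
    have hsub : (A ∩ B).extremePoints ℝ ⊆ {x | ChLat X {x}} := by
      intro v hv
      have hfa := face_eq_convexHull (hfin.subset hA1) hA2 v
      have hfb := face_eq_convexHull (hfin.subset hB1) hB2 v
      have hFA : ChLat X (face A v) := by
        rw [hfa]
        refine chLat_convexHull_of_finite ((hfin.subset hA1).subset inter_subset_right) ?_
          (fun x hx => hA1 hx.2)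
        rcases eq_empty_or_nonempty (face A v ∩ A.extremePoints ℝ) with h | h
        · exfalso
          have : v ∈ face A v := mem_face_self hv.1.1
          rw [hfa, h] at this
          simpa using this
        · exact h
      have hFB : ChLat X (face B v) := by
        rw [hfb]
        refine chLat_convexHull_of_finite ((hfin.subset hB1).subset inter_subset_right) ?_
          (fun x hx => hB1 hx.2)
        rcases eq_empty_or_nonempty (face B v ∩ B.extremePoints ℝ) with h | h
        · exfalso
          have : v ∈ face B v := mem_face_self hv.1.2
          rw [hfb, h] at this
          simpa using this
        · exact h
      have h5 := ChLat.meet _ _ hFA hFB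
      rwa [face_inter_face hA3 hB3 hv] at h5
    have heq : closure (convexHull ℝ ((A ∩ B).extremePoints ℝ)) = A ∩ B :=
      closure_convexHull_extremePoints hC4 hCconv
    rw [((hfin.subset hsub).isClosed_convexHull ℝ).closure_eq] at heq
    exact ⟨hsub, heq.symm, hCconv, hC4⟩

end Stmt8Aux

/-- `Lat^d(X)` is finite iff the completion `X̄ = {x | ChLat X {x}}` is finite,
i.e. iff `X` is finitely completable. -/
theorem stmt8 {d : ℕ} (X : Set (Fin d → ℝ)) :
    {A : Set (Fin d → ℝ) | ChLat X A}.Finite ↔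
      {x : Fin d → ℝ | ChLat X {x}}.Finite := by
  constructor
  · intro h
    have e : {x : Fin d → ℝ | ChLat X {x}}
        = (fun x => ({x} : Set (Fin d → ℝ))) ⁻¹' {A | ChLat X A} := rfl
    rw [e]
    exact h.preimage Set.singleton_injective.injOn
  · intro hfin
    refine ((hfin.finite_subsets.image (convexHull ℝ)).subset ?_)
    intro A hA
    exact ⟨A.extremePoints ℝ, (Stmt8Aux.key hfin hA).1, (Stmt8Aux.key hfin hA).2.1.symm⟩
end

section
/- Let {a, b, c, d, e} ⊆ ℝ² be five distinct points, not all lying on a single line, such that b lies strictly between a and c, and d lies strictly between a and e (a V_5 configuration). Then the lattice Lat²({a,b,c,d,e}) is infinite. -/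
open Set

lemma seg_inter_eq {p q r s z : Fin 2 → ℝ} (t u : ℝ)
    (ht0 : 0 ≤ t) (ht1 : t ≤ 1) (hu0 : 0 ≤ u) (hu1 : u ≤ 1)
    (hz1 : z = (1-t) • p + t • q) (hz2 : z = (1-u) • r + u • s)
    (hdet : (q 0 - p 0) * (s 1 - r 1) - (q 1 - p 1) * (s 0 - r 0) ≠ 0) :
    segment ℝ p q ∩ segment ℝ r s = {z} := by
  ext w
  constructor
  · rintro ⟨⟨t1, t2, ht10, ht20, hts, hw1⟩, ⟨u1, u2, hu10, hu20, hus, hw2⟩⟩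
    have ht1' : t1 = 1 - t2 := by linarith
    have hu1' : u1 = 1 - u2 := by linarith
    subst ht1' hu1'
    have e0 : (1-t2) * p 0 + t2 * q 0 = (1-u2) * r 0 + u2 * s 0 := by
      have h1 := congrFun hw1 0; have h2 := congrFun hw2 0
      simp only [Pi.add_apply, Pi.smul_apply, smul_eq_mul] at h1 h2
      linarith [h1, h2]
    have e1 : (1-t2) * p 1 + t2 * q 1 = (1-u2) * r 1 + u2 * s 1 := by
      have h1 := congrFun hw1 1; have h2 := congrFun hw2 1
      simp only [Pi.add_apply, Pi.smul_apply, smul_eq_mul] at h1 h2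
      linarith [h1, h2]
    have z0 : (1-t) * p 0 + t * q 0 = (1-u) * r 0 + u * s 0 := by
      have h1 := congrFun hz1 0; have h2 := congrFun hz2 0
      simp only [Pi.add_apply, Pi.smul_apply, smul_eq_mul] at h1 h2
      linarith [h1, h2]
    have z1 : (1-t) * p 1 + t * q 1 = (1-u) * r 1 + u * s 1 := by
      have h1 := congrFun hz1 1; have h2 := congrFun hz2 1
      simp only [Pi.add_apply, Pi.smul_apply, smul_eq_mul] at h1 h2
      linarith [h1, h2]
    have k0 : (t2 - t) * (q 0 - p 0) = (u2 - u) * (s 0 - r 0) := by linear_combination e0 - z0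
    have k1 : (t2 - t) * (q 1 - p 1) = (u2 - u) * (s 1 - r 1) := by linear_combination e1 - z1
    have ht2t : t2 = t := by
      by_contra hne
      apply hdet
      have h : (t2 - t) * ((q 0 - p 0) * (s 1 - r 1) - (q 1 - p 1) * (s 0 - r 0)) = 0 := by
        linear_combination (s 1 - r 1) * k0 - (s 0 - r 0) * k1
      rcases mul_eq_zero.mp h with h | h
      · exact absurd (by linarith : t2 = t) hne
      · exact h
    subst ht2t
    exact Set.mem_singleton_iff.mpr (by rw [← hw1, hz1])
  · rintro rfl
    exact ⟨⟨1-t, t, by linarith, ht0, by ring, hz1.symm⟩, ⟨1-u, u, by linarith, hu0, by ring, hz2.symm⟩⟩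

lemma chlat_segment {d : ℕ} {X : Set (Fin d → ℝ)} {p q : Fin d → ℝ}
    (hp : ChLat X {p}) (hq : ChLat X {q}) : ChLat X (segment ℝ p q) := by
  have := ChLat.join _ _ hp hq
  rwa [Set.singleton_union, convexHull_pair] at this

noncomputable def Fmap (β δ u : ℝ) : ℝ := u + (1-u)^2*(1-β)/(2-β-δ-u*(1-β))

lemma step (β δ u : ℝ) (hβ0 : 0 < β) (hβ1 : β < 1) (hδ0 : 0 < δ) (hδ1 : δ < 1)
    (hu0 : 0 ≤ u) (hu1 : u < 1)
    (h : ChLat ({![0,0], ![β,0], ![1,0], ![0,δ], ![0,1]} : Set (Fin 2 → ℝ)) {![(1-u)*β, u*δ]}) :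
    ChLat ({![0,0], ![β,0], ![1,0], ![0,δ], ![0,1]} : Set (Fin 2 → ℝ))
      {![(1-Fmap β δ u)*β, (Fmap β δ u)*δ]} ∧ u < Fmap β δ u ∧ Fmap β δ u < 1 := by
  have h1u : 0 < 1 - u := by linarith
  have h1β : 0 < 1 - β := by linarith
  have h1δ : 0 < 1 - δ := by linarith
  have hEpos : 0 < 2-β-δ-u*(1-β) := by nlinarith [mul_pos h1β h1u]
  have hEne : (2-β-δ-u*(1-β)) ≠ 0 := ne_of_gt hEpos
  have hDpos : 0 < 1 - u*δ - (1-u)*β*δ := by nlinarith [mul_pos (mul_pos hδ0 h1u) h1β]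
  have hDne : (1 - u*δ - (1-u)*β*δ) ≠ 0 := ne_of_gt hDpos
  have huδ : 0 < 1 - u*δ := by nlinarith
  have hnum0 : 0 ≤ u*(1 - u*δ - (1-u)*β*δ) + (1-u)*(1-β)*(1-u*δ) := by
    have := mul_pos (mul_pos h1u h1β) huδ
    nlinarith [mul_nonneg hu0 hDpos.le]
  have hFu : u < Fmap β δ u := by
    rw [Fmap]
    have : 0 < (1-u)^2*(1-β)/(2-β-δ-u*(1-β)) := by positivity
    linarith
  have h1F : (1 - Fmap β δ u) * (2-β-δ-u*(1-β)) = (1-u)*(1-δ) := by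
    rw [Fmap]; field_simp; try ring
  have hF1 : Fmap β δ u < 1 := by nlinarith [mul_pos (mul_pos h1u h1δ) hEpos, h1F]
  have hFE : (Fmap β δ u) * (2-β-δ-u*(1-β))
      = u*(1 - u*δ - (1-u)*β*δ) + (1-u)*(1-β)*(1-u*δ) := by
    rw [Fmap]; field_simp; try ring
  -- point singletons
  have hpa : ChLat ({![0,0], ![β,0], ![1,0], ![0,δ], ![0,1]} : Set (Fin 2 → ℝ)) {![0,0]} :=
    ChLat.point _ (by simp)
  have hpb : ChLat ({![0,0], ![β,0], ![1,0], ![0,δ], ![0,1]} : Set (Fin 2 → ℝ)) {![β,0]} :=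
    ChLat.point _ (by simp)
  have hpc : ChLat ({![0,0], ![β,0], ![1,0], ![0,δ], ![0,1]} : Set (Fin 2 → ℝ)) {![1,0]} :=
    ChLat.point _ (by simp)
  have hpd : ChLat ({![0,0], ![β,0], ![1,0], ![0,δ], ![0,1]} : Set (Fin 2 → ℝ)) {![0,δ]} :=
    ChLat.point _ (by simp)
  have hpe : ChLat ({![0,0], ![β,0], ![1,0], ![0,δ], ![0,1]} : Set (Fin 2 → ℝ)) {![0,1]} :=
    ChLat.point _ (by simp)
  -- the auxiliary point f
  have h1 : segment ℝ ![(1-u)*β, u*δ] ![0,1] ∩ segment ℝ ![1,0] ![0,δ]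
      = {![(1-δ)*(1-u)*β/(1 - u*δ - (1-u)*β*δ),
          δ*(u*(1 - u*δ - (1-u)*β*δ) + (1-u)*(1-β)*(1-u*δ))/(1 - u*δ - (1-u)*β*δ)]} := by
    apply seg_inter_eq (δ*(1-u)*(1-β)/(1 - u*δ - (1-u)*β*δ))
        ((u*(1 - u*δ - (1-u)*β*δ) + (1-u)*(1-β)*(1-u*δ))/(1 - u*δ - (1-u)*β*δ))
    · positivity
    · rw [div_le_one hDpos]; nlinarith [mul_pos (mul_pos hδ0 h1u) h1β]
    · exact div_nonneg hnum0 hDpos.le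
    · rw [div_le_one hDpos]
      nlinarith [mul_pos (mul_pos h1u hβ0) h1δ]
    · funext i; fin_cases i
      · simp only [Fin.zero_eta, Matrix.cons_val_zero, Pi.add_apply, Pi.smul_apply,
          smul_eq_mul, Matrix.cons_val_one, Matrix.head_cons]
        field_simp [show 1 - δ * u - δ * (1 - u) * β ≠ 0 by contrapose! hDne; linarith]; ring
      · simp only [Fin.mk_one, Matrix.cons_val_one, Matrix.head_cons, Pi.add_apply,
          Pi.smul_apply, smul_eq_mul, Matrix.cons_val_zero]
        field_simp [show 1 - δ * u - δ * (1 - u) * β ≠ 0 by contrapose! hDne; linarith]; ring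
    · funext i; fin_cases i
      · simp only [Fin.zero_eta, Matrix.cons_val_zero, Pi.add_apply, Pi.smul_apply,
          smul_eq_mul, Matrix.cons_val_one, Matrix.head_cons]
        field_simp [show 1 - δ * u - δ * (1 - u) * β ≠ 0 by contrapose! hDne; linarith]; ring
      · simp only [Fin.mk_one, Matrix.cons_val_one, Matrix.head_cons, Pi.add_apply,
          Pi.smul_apply, smul_eq_mul, Matrix.cons_val_zero]
        field_simp; try ring
    · simp only [Matrix.cons_val_zero, Matrix.cons_val_one, Matrix.head_cons]
      intro hc; nlinarith [hc]
  have hfc : ChLat ({![0,0], ![β,0], ![1,0], ![0,δ], ![0,1]} : Set (Fin 2 → ℝ))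
      {![(1-δ)*(1-u)*β/(1 - u*δ - (1-u)*β*δ),
        δ*(u*(1 - u*δ - (1-u)*β*δ) + (1-u)*(1-β)*(1-u*δ))/(1 - u*δ - (1-u)*β*δ)]} := by
    have := ChLat.meet _ _ (chlat_segment h hpe) (chlat_segment hpc hpd)
    rwa [h1] at this
  -- the new point g'
  have h2 : segment ℝ ![0,0] ![(1-δ)*(1-u)*β/(1 - u*δ - (1-u)*β*δ),
        δ*(u*(1 - u*δ - (1-u)*β*δ) + (1-u)*(1-β)*(1-u*δ))/(1 - u*δ - (1-u)*β*δ)]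
      ∩ segment ℝ ![β,0] ![0,δ] = {![(1-Fmap β δ u)*β, (Fmap β δ u)*δ]} := by
    apply seg_inter_eq ((1 - u*δ - (1-u)*β*δ)/(2-β-δ-u*(1-β))) (Fmap β δ u)
    · positivity
    · rw [div_le_one hEpos]; nlinarith [mul_pos (mul_pos h1u h1β) h1δ]
    · linarith
    · linarith
    · funext i; fin_cases i
      · simp only [Fin.zero_eta, Matrix.cons_val_zero, Pi.add_apply, Pi.smul_apply,
          smul_eq_mul, Matrix.cons_val_one, Matrix.head_cons, Fmap]
        field_simp; try ring
      · simp only [Fin.mk_one, Matrix.cons_val_one, Matrix.head_cons, Pi.add_apply,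
          Pi.smul_apply, smul_eq_mul, Matrix.cons_val_zero, Fmap]
        field_simp; try ring
    · funext i; fin_cases i <;>
        simp only [Fin.zero_eta, Fin.mk_one, Matrix.cons_val_zero, Matrix.cons_val_one,
          Matrix.head_cons, Pi.add_apply, Pi.smul_apply, smul_eq_mul] <;> ring
    · simp only [Matrix.cons_val_zero, Matrix.cons_val_one, Matrix.head_cons]
      have hkey : ((1-δ)*(1-u)*β/(1 - u*δ - (1-u)*β*δ) - 0) * (δ - 0)
          - (δ*(u*(1 - u*δ - (1-u)*β*δ) + (1-u)*(1-β)*(1-u*δ))/(1 - u*δ - (1-u)*β*δ) - 0) * (0 - β)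
          = ((1-δ)*(1-u)*β*δ + δ*(u*(1 - u*δ - (1-u)*β*δ) + (1-u)*(1-β)*(1-u*δ))*β)
            /(1 - u*δ - (1-u)*β*δ) := by field_simp; try ring
      rw [hkey]
      have hp : 0 < ((1-δ)*(1-u)*β*δ + δ*(u*(1 - u*δ - (1-u)*β*δ) + (1-u)*(1-β)*(1-u*δ))*β)
            /(1 - u*δ - (1-u)*β*δ) := by
        apply div_pos _ hDpos
        nlinarith [mul_pos (mul_pos (mul_pos h1δ h1u) hβ0) hδ0,
          mul_nonneg (mul_nonneg hδ0.le hnum0) hβ0.le]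
      exact ne_of_gt hp
  refine ⟨?_, hFu, hF1⟩
  have hm := ChLat.meet _ _ (chlat_segment hpa hfc) (chlat_segment hpb hpd)
  rwa [h2] at hm



noncomputable def useq (β δ : ℝ) : ℕ → ℝ
  | 0 => 0
  | n+1 => Fmap β δ (useq β δ n)

lemma normalized (β δ : ℝ) (hβ0 : 0 < β) (hβ1 : β < 1) (hδ0 : 0 < δ) (hδ1 : δ < 1) :
    {A : Set (Fin 2 → ℝ) |
      ChLat ({![0,0], ![β,0], ![1,0], ![0,δ], ![0,1]} : Set (Fin 2 → ℝ)) A}.Infinite := by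
  have inv : ∀ n : ℕ, 0 ≤ useq β δ n ∧ useq β δ n < 1 ∧
      ChLat ({![0,0], ![β,0], ![1,0], ![0,δ], ![0,1]} : Set (Fin 2 → ℝ))
        {![(1-useq β δ n)*β, (useq β δ n)*δ]} := by
    intro n
    induction n with
    | zero =>
      refine ⟨le_refl _, one_pos, ?_⟩
      have hv : (![(1-useq β δ 0)*β, (useq β δ 0)*δ] : Fin 2 → ℝ) = ![β, 0] := by
        show (![(1-(0:ℝ))*β, (0:ℝ)*δ] : Fin 2 → ℝ) = ![β, 0]
        norm_num
      rw [hv]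
      exact ChLat.point _ (by simp)
    | succ n ih =>
      obtain ⟨h0, h1, hc⟩ := ih
      obtain ⟨hc', hlt, hlt1⟩ := step β δ _ hβ0 hβ1 hδ0 hδ1 h0 h1 hc
      exact ⟨by show 0 ≤ Fmap β δ (useq β δ n); linarith, hlt1, hc'⟩
  have hlt : ∀ n : ℕ, useq β δ n < useq β δ (n+1) := by
    intro n
    obtain ⟨h0, h1, hc⟩ := inv n
    exact (step β δ _ hβ0 hβ1 hδ0 hδ1 h0 h1 hc).2.1
  have hmono : StrictMono (useq β δ) := strictMono_nat_of_lt_succ hlt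
  apply Set.infinite_of_injective_forall_mem
    (f := fun n : ℕ => ({![(1-useq β δ n)*β, (useq β δ n)*δ]} : Set (Fin 2 → ℝ)))
  · intro m n hmn
    simp only [Set.singleton_eq_singleton_iff] at hmn
    have := congrFun hmn 1
    simp only [Matrix.cons_val_one, Matrix.head_cons] at this
    have : useq β δ m = useq β δ n := by
      field_simp at this
      simp only [Matrix.cons_val_zero] at this
      exact mul_right_cancel₀ (ne_of_gt hδ0) (this.trans (mul_comm _ _))
    exact hmono.injective this
  · intro n
    exact (inv n).2.2

lemma chlat_image {d : ℕ} {X : Set (Fin d → ℝ)} {A : Set (Fin d → ℝ)}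
    (T : (Fin d → ℝ) →ᵃ[ℝ] (Fin d → ℝ)) (hT : Function.Injective T)
    (h : ChLat X A) : ChLat (T '' X) (T '' A) := by
  induction h with
  | point x hx =>
    rw [Set.image_singleton]
    exact ChLat.point _ ⟨x, hx, rfl⟩
  | join A B hA hB ihA ihB =>
    have := ChLat.join _ _ ihA ihB
    rwa [← Set.image_union, ← AffineMap.image_convexHull] at this
  | meet A B hA hB ihA ihB =>
    have := ChLat.meet _ _ ihA ihB
    rwa [← Set.image_inter hT] at this

/-- For a `V₅` configuration (five distinct points `a,b,c,d,e` in the plane, not all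
collinear, with `b` strictly between `a` and `c` and `d` strictly between `a` and `e`),
the lattice `Lat²({a,b,c,d,e})` is infinite. -/
theorem stmt10 (a b c d e : Fin 2 → ℝ)
    (hdist : [a, b, c, d, e].Pairwise (· ≠ ·))
    (hncol : ¬ Collinear ℝ ({a, b, c, d, e} : Set (Fin 2 → ℝ)))
    (h1 : Sbtw ℝ a b c) (h2 : Sbtw ℝ a d e) :
    {A : Set (Fin 2 → ℝ) | ChLat ({a, b, c, d, e} : Set (Fin 2 → ℝ)) A}.Infinite := by
  simp only [List.pairwise_cons, List.mem_cons, List.not_mem_nil] at hdist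
  have hac : a ≠ c := hdist.1 c (by tauto)
  -- not collinear a c e
  have hncol3 : ¬ Collinear ℝ ({a, c, e} : Set (Fin 2 → ℝ)) := by
    intro hcol
    apply hncol
    have hd : d ∈ affineSpan ℝ ({a, c, e} : Set (Fin 2 → ℝ)) := by
      have := h2.wbtw.mem_affineSpan
      exact affineSpan_mono ℝ (by intro x hx; simp at hx; rcases hx with h|h <;> simp [h]) this
    have hb : b ∈ affineSpan ℝ (insert d ({a, c, e} : Set (Fin 2 → ℝ))) := by
      have := h1.wbtw.mem_affineSpan
      exact affineSpan_mono ℝ (by intro x hx; simp at hx; rcases hx with h|h <;> simp [h]) this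
    have hset : ({a, b, c, d, e} : Set (Fin 2 → ℝ)) = insert b (insert d {a, c, e}) := by
      ext x; simp; tauto
    rw [hset]
    rw [collinear_insert_iff_of_mem_affineSpan hb,
        collinear_insert_iff_of_mem_affineSpan hd]
    exact hcol
  -- linear independence of c - a, e - a
  have hind : ∀ r s : ℝ, r • (c - a) + s • (e - a) = 0 → r = 0 ∧ s = 0 := by
    intro r s hrs
    by_cases hs : s = 0
    · subst hs
      rw [zero_smul, add_zero] at hrs
      rcases smul_eq_zero.mp hrs with h | h
      · exact ⟨h, rfl⟩
      · exact absurd (sub_eq_zero.mp h).symm hac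
    · exfalso
      apply hncol3
      rw [collinear_iff_of_mem (show a ∈ ({a,c,e} : Set (Fin 2 → ℝ)) by simp)]
      refine ⟨c - a, fun x hx => ?_⟩
      simp only [Set.mem_insert_iff, Set.mem_singleton_iff] at hx
      rcases hx with rfl | rfl | rfl
      · exact ⟨0, by simp⟩
      · refine ⟨1, ?_⟩
        rw [one_smul, vadd_eq_add]
        abel
      · refine ⟨-r/s, ?_⟩
        rw [add_comm] at hrs
        rw [add_eq_zero_iff_eq_neg, ← neg_smul] at hrs
        have key : x - a = (-r/s) • (c - a) := by
          have := congrArg (fun v => (s⁻¹ : ℝ) • v) hrs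
          simp only [smul_smul] at this
          rw [inv_mul_cancel₀ hs, one_smul] at this
          rw [this]
          congr 1
          field_simp
        rw [vadd_eq_add, ← key]
        abel
  -- parameters of b and d
  obtain ⟨β, hβ, hb⟩ := h1.mem_image_Ioo
  obtain ⟨δ, hδ, hd⟩ := h2.mem_image_Ioo
  rw [AffineMap.lineMap_apply] at hb hd
  -- the affine map
  set L : (Fin 2 → ℝ) →ₗ[ℝ] (Fin 2 → ℝ) :=
    (LinearMap.proj 0).smulRight (c-a) + (LinearMap.proj 1).smulRight (e-a) with hLdef
  have hL : ∀ x : Fin 2 → ℝ, L x = x 0 • (c-a) + x 1 • (e-a) := fun x => rfl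
  set T : (Fin 2 → ℝ) →ᵃ[ℝ] (Fin 2 → ℝ) :=
    AffineMap.mk' (fun x => L x + a) L 0 (by
      intro p'
      simp only [vsub_eq_sub, sub_zero, vadd_eq_add, map_zero, zero_add]) with hTdef
  have hTapp : ∀ x : Fin 2 → ℝ, T x = x 0 • (c-a) + x 1 • (e-a) + a := by
    intro x
    rw [hTdef, AffineMap.coe_mk', hL]
  have hTinj : Function.Injective T := by
    intro x y hxy
    rw [hTapp, hTapp] at hxy
    have hsub : (x 0 - y 0) • (c-a) + (x 1 - y 1) • (e-a) = 0 := by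
      rw [sub_smul, sub_smul]
      abel_nf
      abel_nf at hxy
      linear_combination (norm := abel) hxy
    obtain ⟨e0, e1⟩ := hind _ _ hsub
    funext i
    fin_cases i
    · exact sub_eq_zero.mp e0
    · exact sub_eq_zero.mp e1
  have Ta : T ![0,0] = a := by rw [hTapp]; simp
  have Tb : T ![β,0] = b := by
    rw [hTapp]; simp only [Matrix.cons_val_zero, Matrix.cons_val_one, Matrix.head_cons]
    rw [← hb, vsub_eq_sub, vadd_eq_add]; simp
  have Tc : T ![1,0] = c := by
    rw [hTapp]; simp only [Matrix.cons_val_zero, Matrix.cons_val_one, Matrix.head_cons]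
    simp
  have Td : T ![0,δ] = d := by
    rw [hTapp]; simp only [Matrix.cons_val_zero, Matrix.cons_val_one, Matrix.head_cons]
    rw [← hd, vsub_eq_sub, vadd_eq_add]; simp
  have Te : T ![0,1] = e := by
    rw [hTapp]; simp only [Matrix.cons_val_zero, Matrix.cons_val_one, Matrix.head_cons]
    simp
  have himg : T '' ({![0,0], ![β,0], ![1,0], ![0,δ], ![0,1]} : Set (Fin 2 → ℝ))
      = ({a, b, c, d, e} : Set (Fin 2 → ℝ)) := by
    simp only [Set.image_insert_eq, Set.image_singleton, Ta, Tb, Tc, Td, Te]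
  have hinf := normalized β δ hβ.1 hβ.2 hδ.1 hδ.2
  have hinf2 : ((fun A : Set (Fin 2 → ℝ) => T '' A) ''
      {A : Set (Fin 2 → ℝ) |
        ChLat ({![0,0], ![β,0], ![1,0], ![0,δ], ![0,1]} : Set (Fin 2 → ℝ)) A}).Infinite :=
    hinf.image ((Set.image_injective.mpr hTinj).injOn)
  apply hinf2.mono
  rintro _ ⟨A, hA, rfl⟩
  have := chlat_image T hTinj hA
  rwa [himg] at this
end

section
/- Let π be an affine hyperplane in ℝ^{d+1} and X ⊆ π a configuration. Let a, b be points strictly on opposite sides of π and let c be the unique point of π on the segment from a to b; assume c ∈ X or c ∉ convexHull ℝ X. Let a′, b′ also be points strictly on opposite sides of π whose segment meets π exactly in the same point c. Then X ∪ {a, b} and X ∪ {a′, b′} are equivalent configurations, via the map fixing X pointwise and sending a ↦ a′, b ↦ b′. -/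
open Set

section Helpers

variable {V : Type*} [AddCommGroup V] [Module ℝ V]

lemma sign_opp (φ : V →ₗ[ℝ] ℝ) {r : ℝ} {a b c : V}
    (ha : φ a ≠ r) (hb : φ b ≠ r) (hc : φ c = r) (hcs : c ∈ segment ℝ a b) :
    (φ a - r) * (φ b - r) < 0 := by
  obtain ⟨u, v, hu, hv, huv, rfl⟩ := hcs
  simp only [map_add, map_smul, smul_eq_mul] at hc
  have hu0 : 0 < u := by
    rcases hu.lt_or_eq with h | h
    · exact h
    · exact absurd (by linear_combination hc - φ b * huv + (φ a - φ b) * h) hb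
  have hv0 : 0 < v := by
    rcases hv.lt_or_eq with h | h
    · exact h
    · exact absurd (by linear_combination hc - φ a * huv + (φ b - φ a) * h) ha
  have hne : φ a - φ b ≠ 0 := by
    intro h
    exact ha (by linear_combination hc - φ a * huv + v * h)
  have e1 : φ a - r = v * (φ a - φ b) := by linear_combination hc - φ a * huv
  have e2 : φ b - r = u * (φ b - φ a) := by linear_combination hc - φ b * huv
  rw [e1, e2]
  have h1 := mul_pos hu0 hv0
  have h2 := mul_self_pos.mpr hne
  nlinarith

lemma hull_subset_level (φ : V →ₗ[ℝ] ℝ) {r : ℝ} {A : Set V} (hA : A ⊆ {x | φ x = r}) :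
    convexHull ℝ A ⊆ {x | φ x = r} :=
  convexHull_min hA (convex_hyperplane φ.isLinear r)

lemma seg_unique (φ : V →ₗ[ℝ] ℝ) {r : ℝ} {a b c z : V}
    (ha : φ a ≠ r) (hc : φ c = r) (hcs : c ∈ segment ℝ a b)
    (hz : φ z = r) (hzs : z ∈ segment ℝ a b) : z = c := by
  obtain ⟨u, v, hu, hv, huv, rfl⟩ := hcs
  obtain ⟨u', v', hu', hv', huv', rfl⟩ := hzs
  simp only [map_add, map_smul, smul_eq_mul] at hc hz
  have hne : φ a - φ b ≠ 0 := by
    intro h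
    exact ha (by linear_combination hc - φ a * huv + v * h)
  have key : (u' - u) * (φ a - φ b) = 0 := by
    linear_combination hz - hc - φ b * huv' + φ b * huv
  have hu'' : u' = u := by
    rcases mul_eq_zero.mp key with h | h
    · linarith [sub_eq_zero.mp h]
    · exact absurd h hne
  have hv'' : v' = v := by linarith
  rw [hu'', hv'']

lemma slice1 (φ : V →ₗ[ℝ] ℝ) {r : ℝ} {A₀ : Set V} (hA₀ : A₀ ⊆ {x | φ x = r})
    {a : V} (ha : φ a ≠ r) :
    convexHull ℝ (A₀ ∪ {a}) ∩ {x | φ x = r} = convexHull ℝ A₀ := by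
  apply Subset.antisymm
  · rcases A₀.eq_empty_or_nonempty with rfl | hne
    · rintro x ⟨hx, hxr⟩
      simp only [empty_union, convexHull_singleton, mem_singleton_iff] at hx
      exact absurd (hx ▸ hxr) ha
    · rintro x ⟨hx, hxr⟩
      rw [union_singleton, convexHull_insert hne, mem_convexJoin] at hx
      obtain ⟨p, hp, q, hq, hx⟩ := hx
      rw [mem_singleton_iff] at hp
      obtain ⟨u, v, hu, hv, huv, rfl⟩ := hx
      have hqr : φ q = r := hull_subset_level φ hA₀ hq
      rw [mem_setOf_eq, map_add, map_smul, map_smul, smul_eq_mul, smul_eq_mul, hqr, hp] at hxr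
      have hu0 : u = 0 := by
        by_contra h
        apply ha
        have h2 : u * φ a = u * r := by linear_combination hxr - r * huv
        exact mul_left_cancel₀ h h2
      rw [hu0, zero_smul, zero_add, show v = 1 by linarith, one_smul]
      exact hq
  · intro x hx
    exact ⟨convexHull_mono subset_union_left hx, hull_subset_level φ hA₀ hx⟩

lemma slice2 (φ : V →ₗ[ℝ] ℝ) {r : ℝ} {A₀ : Set V} (hA₀ : A₀ ⊆ {x | φ x = r})
    {a b c : V} (ha : φ a ≠ r) (hb : φ b ≠ r) (hc : φ c = r) (hcs : c ∈ segment ℝ a b) :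
    convexHull ℝ (A₀ ∪ {a, b}) ∩ {x | φ x = r} = convexHull ℝ (A₀ ∪ {c}) := by
  apply Subset.antisymm
  · rcases A₀.eq_empty_or_nonempty with rfl | hne
    · rintro x ⟨hx, hxr⟩
      simp only [empty_union] at hx ⊢
      rw [convexHull_pair] at hx
      rw [convexHull_singleton, mem_singleton_iff]
      exact seg_unique φ ha hc hcs hxr hx
    · rintro x ⟨hx, hxr⟩
      rw [convexHull_union hne (insert_nonempty a {b}), mem_convexJoin] at hx
      obtain ⟨p, hp, q, hq, hx⟩ := hx
      rw [convexHull_pair] at hq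
      obtain ⟨u, v, hu, hv, huv, rfl⟩ := hx
      have hpr : φ p = r := hull_subset_level φ hA₀ hp
      rw [mem_setOf_eq, map_add, map_smul, map_smul, smul_eq_mul, smul_eq_mul, hpr] at hxr
      by_cases hv0 : v = 0
      · rw [hv0, zero_smul, add_zero, show u = 1 by linarith, one_smul]
        exact convexHull_mono subset_union_left hp
      · have hqr : φ q = r := by
          have h2 : v * φ q = v * r := by linear_combination hxr - r * huv
          exact mul_left_cancel₀ hv0 h2
        have hqc : q = c := seg_unique φ ha hc hcs hqr hq
        have hp' : p ∈ convexHull ℝ (A₀ ∪ {c}) := convexHull_mono subset_union_left hp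
        have hc'' : c ∈ convexHull ℝ (A₀ ∪ {c}) :=
          subset_convexHull ℝ _ (mem_union_right _ rfl)
        have hmem : u • p + v • c ∈ convexHull ℝ (A₀ ∪ {c}) :=
          (convex_convexHull ℝ _).segment_subset hp' hc'' ⟨u, v, hu, hv, huv, rfl⟩
        rwa [hqc]
  · apply subset_inter
    · apply convexHull_min _ (convex_convexHull ℝ _)
      rintro x (hx | hx)
      · exact subset_convexHull ℝ _ (mem_union_left _ hx)
      · rw [mem_singleton_iff] at hx
        subst hx
        have hseg : segment ℝ a b ⊆ convexHull ℝ (A₀ ∪ {a, b}) := by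
          rw [← convexHull_pair]
          exact convexHull_mono subset_union_right
        exact hseg hcs
    · apply hull_subset_level
      rintro x (hx | hx)
      · exact hA₀ hx
      · rw [mem_singleton_iff] at hx
        subst hx
        exact hc

lemma not_mem_hull (φ : V →ₗ[ℝ] ℝ) {r : ℝ} {A₀ : Set V} (hA₀ : A₀ ⊆ {x | φ x = r})
    {a b : V} (hsign : (φ a - r) * (φ b - r) < 0) :
    b ∉ convexHull ℝ (A₀ ∪ {a}) := by
  intro hbmem
  set t := φ a - r with ht
  have htne : t ≠ 0 := by
    intro h
    rw [h, zero_mul] at hsign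
    exact lt_irrefl 0 hsign
  have hlin : IsLinearMap ℝ (fun x => t * φ x) :=
    ⟨fun x y => by rw [map_add, mul_add], fun s x => by
      rw [map_smul, smul_eq_mul, smul_eq_mul]; ring⟩
  have hconv : Convex ℝ {x | t * r ≤ t * φ x} := convex_halfSpace_ge hlin (t * r)
  have hsub : convexHull ℝ (A₀ ∪ {a}) ⊆ {x | t * r ≤ t * φ x} := by
    apply convexHull_min _ hconv
    rintro x (hx | hx)
    · rw [mem_setOf_eq, hA₀ hx]
    · rw [mem_singleton_iff] at hx
      subst hx
      rw [mem_setOf_eq]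
      have heq : t * φ x - t * r = t * t := by rw [ht]; ring
      linarith [mul_self_pos.mpr htne]
  have hb2 := hsub hbmem
  rw [mem_setOf_eq] at hb2
  rw [mul_sub] at hsign
  linarith


end Helpers

section RCH

variable {V : Type*} [AddCommGroup V] [Module ℝ V]

lemma rch0 (φ : V →ₗ[ℝ] ℝ) {r : ℝ} {X : Set V} (hX : X ⊆ {x | φ x = r})
    {A₀ : Set V} (hA₀ : A₀ ⊆ X) {a b : V} (ha : φ a ≠ r) (hb : φ b ≠ r) :
    convexHull ℝ A₀ ∩ (X ∪ {a, b}) = convexHull ℝ A₀ ∩ X := by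
  rw [inter_union_distrib_left]
  have hemp : convexHull ℝ A₀ ∩ {a, b} = ∅ := by
    ext x
    simp only [mem_inter_iff, mem_insert_iff, mem_singleton_iff, mem_empty_iff_false, iff_false,
      not_and, not_or]
    intro hx
    constructor
    · rintro rfl; exact ha (hull_subset_level φ (hA₀.trans hX) hx)
    · rintro rfl; exact hb (hull_subset_level φ (hA₀.trans hX) hx)
  rw [hemp, union_empty]

lemma rch1 (φ : V →ₗ[ℝ] ℝ) {r : ℝ} {X : Set V} (hX : X ⊆ {x | φ x = r})
    {A₀ : Set V} (hA₀ : A₀ ⊆ X) {a b : V}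
    (hsign : (φ a - r) * (φ b - r) < 0) :
    convexHull ℝ (A₀ ∪ {a}) ∩ (X ∪ {a, b}) = (convexHull ℝ A₀ ∩ X) ∪ {a} := by
  have ha : φ a ≠ r := by
    intro h; rw [h, sub_self, zero_mul] at hsign; exact lt_irrefl 0 hsign
  rw [inter_union_distrib_left]
  congr 1
  · ext x
    constructor
    · rintro ⟨hx, hxX⟩
      have h2 : x ∈ convexHull ℝ (A₀ ∪ {a}) ∩ {x | φ x = r} := ⟨hx, hX hxX⟩
      rw [slice1 φ (hA₀.trans hX) ha] at h2
      exact ⟨h2, hxX⟩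
    · rintro ⟨hx, hxX⟩
      exact ⟨convexHull_mono subset_union_left hx, hxX⟩
  · ext x
    simp only [mem_inter_iff, mem_insert_iff, mem_singleton_iff]
    constructor
    · rintro ⟨hx, rfl | rfl⟩
      · rfl
      · exact absurd hx (not_mem_hull φ (hA₀.trans hX) hsign)
    · rintro rfl
      exact ⟨subset_convexHull ℝ _ (mem_union_right _ rfl), Or.inl rfl⟩

lemma rch2 (φ : V →ₗ[ℝ] ℝ) {r : ℝ} {X : Set V} (hX : X ⊆ {x | φ x = r})
    {A₀ : Set V} (hA₀ : A₀ ⊆ X) {a b c : V}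
    (ha : φ a ≠ r) (hb : φ b ≠ r) (hc : φ c = r) (hcs : c ∈ segment ℝ a b) :
    convexHull ℝ (A₀ ∪ {a, b}) ∩ (X ∪ {a, b}) =
      (convexHull ℝ (A₀ ∪ {c}) ∩ X) ∪ {a, b} := by
  rw [inter_union_distrib_left]
  congr 1
  · ext x
    constructor
    · rintro ⟨hx, hxX⟩
      have h2 : x ∈ convexHull ℝ (A₀ ∪ {a, b}) ∩ {x | φ x = r} := ⟨hx, hX hxX⟩
      rw [slice2 φ (hA₀.trans hX) ha hb hc hcs] at h2
      exact ⟨h2, hxX⟩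
    · rintro ⟨hx, hxX⟩
      have h2 : x ∈ convexHull ℝ (A₀ ∪ {a, b}) ∩ {x | φ x = r} := by
        rw [slice2 φ (hA₀.trans hX) ha hb hc hcs]
        exact hx
      exact ⟨h2.1, hxX⟩
  · rw [inter_eq_right]
    intro x hx
    exact subset_convexHull ℝ _ (mem_union_right _ hx)

end RCH



/-- `f` is a morphism of configurations from `X` to `Y`: it maps `X` into `Y` and
satisfies `f(Rch_X(A)) = Rch_Y(f(A))` for every `A ⊆ X`, where
`Rch_X(A) = convexHull ℝ A ∩ X` is the relative convex hull. -/
def IsConfigMorphism {d e : ℕ} (f : (Fin d → ℝ) → (Fin e → ℝ))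
    (X : Set (Fin d → ℝ)) (Y : Set (Fin e → ℝ)) : Prop :=
  f '' X ⊆ Y ∧ ∀ A ⊆ X, f '' (convexHull ℝ A ∩ X) = convexHull ℝ (f '' A) ∩ Y

/-- `π` is an affine hyperplane: the level set of a nonzero linear functional. -/
def IsAffineHyperplane {n : ℕ} (π : AffineSubspace ℝ (Fin n → ℝ)) : Prop :=
  ∃ (φ : (Fin n → ℝ) →ₗ[ℝ] ℝ) (r : ℝ), φ ≠ 0 ∧ (π : Set (Fin n → ℝ)) = {x | φ x = r}

/-- The cross-operator is well defined: if `a, b` and `a', b'` are pairs of points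
strictly on opposite sides of an affine hyperplane `π ⊆ ℝ^{d+1}` whose segments meet
`π` in the same point `c`, and `X ⊆ π` is a configuration with `c ∈ X` or
`c ∉ convexHull ℝ X`, then `X ∪ {a, b} ≡ X ∪ {a', b'}` via the map fixing `X`
pointwise and sending `a ↦ a'`, `b ↦ b'`. -/
theorem stmt16 {d : ℕ} (π : AffineSubspace ℝ (Fin (d + 1) → ℝ))
    (hπ : IsAffineHyperplane π)
    (X : Set (Fin (d + 1) → ℝ)) (hX : X ⊆ (π : Set (Fin (d + 1) → ℝ)))
    (a b a' b' c : Fin (d + 1) → ℝ)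
    (hab : π.SOppSide a b) (hab' : π.SOppSide a' b')
    (hc : segment ℝ a b ∩ (π : Set (Fin (d + 1) → ℝ)) = {c})
    (hc' : segment ℝ a' b' ∩ (π : Set (Fin (d + 1) → ℝ)) = {c})
    (hcX : c ∈ X ∨ c ∉ convexHull ℝ X) :
    IsConfigMorphism (fun x => if x = a then a' else if x = b then b' else x)
      (X ∪ {a, b}) (X ∪ {a', b'}) ∧
    Set.BijOn (fun x => if x = a then a' else if x = b then b' else x)
      (X ∪ {a, b}) (X ∪ {a', b'}) := by
  clear hcX
  obtain ⟨φ, r, hφ0, hπs⟩ := hπ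
  have hXlev : X ⊆ {x | φ x = r} := hπs ▸ hX
  have hmem : ∀ x : Fin (d + 1) → ℝ, φ x = r → x ∈ π := by
    intro x hx
    rw [← AffineSubspace.mem_coe, hπs]
    exact hx
  have ha : φ a ≠ r := fun h => hab.2.1 (hmem a h)
  have hb : φ b ≠ r := fun h => hab.2.2 (hmem b h)
  have ha' : φ a' ≠ r := fun h => hab'.2.1 (hmem a' h)
  have hb' : φ b' ≠ r := fun h => hab'.2.2 (hmem b' h)
  have hcmem : c ∈ segment ℝ a b ∩ (π : Set (Fin (d + 1) → ℝ)) := by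
    rw [hc]; exact rfl
  have hcmem' : c ∈ segment ℝ a' b' ∩ (π : Set (Fin (d + 1) → ℝ)) := by
    rw [hc']; exact rfl
  have hcs : c ∈ segment ℝ a b := hcmem.1
  have hcs' : c ∈ segment ℝ a' b' := hcmem'.1
  have hcr : φ c = r := by
    have h2 := hcmem.2
    rwa [hπs] at h2
  have hsign := sign_opp φ ha hb hcr hcs
  have hsign' := sign_opp φ ha' hb' hcr hcs'
  set f : (Fin (d + 1) → ℝ) → (Fin (d + 1) → ℝ) :=
    fun x => if x = a then a' else if x = b then b' else x with hf
  have hXa : ∀ x ∈ X, x ≠ a := fun x hx h => ha (h ▸ hXlev hx)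
  have hXb : ∀ x ∈ X, x ≠ b := fun x hx h => hb (h ▸ hXlev hx)
  have hfX : ∀ x ∈ X, f x = x := by
    intro x hx
    simp only [hf]
    rw [if_neg (hXa x hx), if_neg (hXb x hx)]
  have hab0 : a ≠ b := by
    intro h; rw [h] at hsign; nlinarith [mul_self_nonneg (φ b - r)]
  have hab0' : a' ≠ b' := by
    intro h; rw [h] at hsign'; nlinarith [mul_self_nonneg (φ b' - r)]
  have hfa : f a = a' := if_pos rfl
  have hfb : f b = b' := by
    simp only [hf]
    rw [if_neg (Ne.symm hab0)]
    simp
  have himg0 : ∀ S ⊆ X, f '' S = S := by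
    intro S hS
    rw [Set.image_congr (fun x hx => hfX x (hS hx))]
    exact Set.image_id S
  have himgab : f '' {a, b} = {a', b'} := by
    rw [Set.image_pair, hfa, hfb]
  have himg : f '' (X ∪ {a, b}) = X ∪ {a', b'} := by
    rw [Set.image_union, himg0 X subset_rfl, himgab]
  have hmorph : ∀ A ⊆ X ∪ {a, b},
      f '' (convexHull ℝ A ∩ (X ∪ {a, b})) = convexHull ℝ (f '' A) ∩ (X ∪ {a', b'}) := by
    intro A hA
    have hA₀ : A ∩ X ⊆ X := Set.inter_subset_right
    by_cases haA : a ∈ A <;> by_cases hbA : b ∈ A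
    · -- both a and b in A
      have hAeq : A = (A ∩ X) ∪ {a, b} := by
        apply Set.Subset.antisymm
        · intro x hx
          rcases hA hx with hxX | hxab
          · exact Or.inl ⟨hx, hxX⟩
          · exact Or.inr hxab
        · rintro x (hx | hx)
          · exact hx.1
          · rcases hx with rfl | rfl
            exacts [haA, hbA]
      rw [hAeq]
      calc f '' (convexHull ℝ ((A ∩ X) ∪ {a, b}) ∩ (X ∪ {a, b}))
          = f '' ((convexHull ℝ ((A ∩ X) ∪ {c}) ∩ X) ∪ {a, b}) := by
            rw [rch2 φ hXlev hA₀ ha hb hcr hcs]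
        _ = (convexHull ℝ ((A ∩ X) ∪ {c}) ∩ X) ∪ {a', b'} := by
            rw [Set.image_union, himg0 _ Set.inter_subset_right, himgab]
        _ = convexHull ℝ ((A ∩ X) ∪ {a', b'}) ∩ (X ∪ {a', b'}) :=
            (rch2 φ hXlev hA₀ ha' hb' hcr hcs').symm
        _ = convexHull ℝ (f '' ((A ∩ X) ∪ {a, b})) ∩ (X ∪ {a', b'}) := by
            rw [Set.image_union, himg0 _ hA₀, himgab]
    · -- only a in A
      have hAeq : A = (A ∩ X) ∪ {a} := by
        apply Set.Subset.antisymm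
        · intro x hx
          rcases hA hx with hxX | hxab
          · exact Or.inl ⟨hx, hxX⟩
          · rcases hxab with rfl | rfl
            · exact Or.inr rfl
            · exact absurd hx hbA
        · rintro x (hx | hx)
          · exact hx.1
          · rw [Set.mem_singleton_iff] at hx
            exact hx ▸ haA
      have hfs : f '' {a} = {a'} := by rw [Set.image_singleton, hfa]
      rw [hAeq]
      calc f '' (convexHull ℝ ((A ∩ X) ∪ {a}) ∩ (X ∪ {a, b}))
          = f '' ((convexHull ℝ (A ∩ X) ∩ X) ∪ {a}) := by
            rw [rch1 φ hXlev hA₀ hsign]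
        _ = (convexHull ℝ (A ∩ X) ∩ X) ∪ {a'} := by
            rw [Set.image_union, himg0 _ Set.inter_subset_right, hfs]
        _ = convexHull ℝ ((A ∩ X) ∪ {a'}) ∩ (X ∪ {a', b'}) :=
            (rch1 φ hXlev hA₀ hsign').symm
        _ = convexHull ℝ (f '' ((A ∩ X) ∪ {a})) ∩ (X ∪ {a', b'}) := by
            rw [Set.image_union, himg0 _ hA₀, hfs]
    · -- only b in A
      have hAeq : A = (A ∩ X) ∪ {b} := by
        apply Set.Subset.antisymm
        · intro x hx
          rcases hA hx with hxX | hxab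
          · exact Or.inl ⟨hx, hxX⟩
          · rcases hxab with rfl | rfl
            · exact absurd hx haA
            · exact Or.inr rfl
        · rintro x (hx | hx)
          · exact hx.1
          · rw [Set.mem_singleton_iff] at hx
            exact hx ▸ hbA
      have hfs : f '' {b} = {b'} := by rw [Set.image_singleton, hfb]
      have hsignba : (φ b - r) * (φ a - r) < 0 := by rw [mul_comm]; exact hsign
      have hsignba' : (φ b' - r) * (φ a' - r) < 0 := by rw [mul_comm]; exact hsign'
      rw [hAeq]
      calc f '' (convexHull ℝ ((A ∩ X) ∪ {b}) ∩ (X ∪ {a, b}))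
          = f '' ((convexHull ℝ (A ∩ X) ∩ X) ∪ {b}) := by
            rw [Set.pair_comm a b, rch1 φ hXlev hA₀ hsignba]
        _ = (convexHull ℝ (A ∩ X) ∩ X) ∪ {b'} := by
            rw [Set.image_union, himg0 _ Set.inter_subset_right, hfs]
        _ = convexHull ℝ ((A ∩ X) ∪ {b'}) ∩ (X ∪ {a', b'}) := by
            rw [Set.pair_comm a' b']
            exact (rch1 φ hXlev hA₀ hsignba').symm
        _ = convexHull ℝ (f '' ((A ∩ X) ∪ {b})) ∩ (X ∪ {a', b'}) := by
            rw [Set.image_union, himg0 _ hA₀, hfs]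
    · -- neither in A
      have hAX : A ⊆ X := by
        intro x hx
        rcases hA hx with hxX | hxab
        · exact hxX
        · rcases hxab with rfl | rfl
          · exact absurd hx haA
          · exact absurd hx hbA
      calc f '' (convexHull ℝ A ∩ (X ∪ {a, b}))
          = f '' (convexHull ℝ A ∩ X) := by rw [rch0 φ hXlev hAX ha hb]
        _ = convexHull ℝ A ∩ X := himg0 _ Set.inter_subset_right
        _ = convexHull ℝ A ∩ (X ∪ {a', b'}) := (rch0 φ hXlev hAX ha' hb').symm
        _ = convexHull ℝ (f '' A) ∩ (X ∪ {a', b'}) := by rw [himg0 A hAX]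
  refine ⟨⟨himg.le, hmorph⟩, ?_, ?_, ?_⟩
  · exact fun x hx => himg ▸ Set.mem_image_of_mem f hx
  · rintro x (hx | hx) y (hy | hy) hxy
    · rwa [hfX x hx, hfX y hy] at hxy
    · exfalso
      simp only [Set.mem_insert_iff, Set.mem_singleton_iff] at hy
      rcases hy with rfl | rfl
      · rw [hfX x hx, hfa] at hxy
        exact ha' (by rw [← hxy]; exact hXlev hx)
      · rw [hfX x hx, hfb] at hxy
        exact hb' (by rw [← hxy]; exact hXlev hx)
    · exfalso
      simp only [Set.mem_insert_iff, Set.mem_singleton_iff] at hx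
      rcases hx with rfl | rfl
      · rw [hfX y hy, hfa] at hxy
        exact ha' (by rw [hxy]; exact hXlev hy)
      · rw [hfX y hy, hfb] at hxy
        exact hb' (by rw [hxy]; exact hXlev hy)
    · simp only [Set.mem_insert_iff, Set.mem_singleton_iff] at hx hy
      rcases hx with rfl | rfl <;> rcases hy with rfl | rfl
      · rfl
      · rw [hfa, hfb] at hxy; exact absurd hxy hab0'
      · rw [hfa, hfb] at hxy; exact absurd hxy.symm hab0'
      · rfl
  · rw [Set.SurjOn, himg]
end

section
/- Let n ≥ 2 and let x_1, …, x_n be distinct collinear points in ℝ², occurring in this order along their line (each x_i with 1 < i < n lies strictly between x_{i-1} and x_{i+1}). Then the lattice Lat²({x_1, …, x_n}), ordered by inclusion, is order-isomorphic to the lattice of order-convex subsets of Fin n ordered by inclusion (equivalently, to the lattice W_n of contiguous subwords of a word of n distinct letters, ordered by the factor relation). -/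
private lemma hull_Icc_union (a b c d : ℝ) (hab : a ≤ b) (hcd : c ≤ d) :
    convexHull ℝ (Set.Icc a b ∪ Set.Icc c d) = Set.Icc (min a c) (max b d) := by
  apply le_antisymm
  · apply convexHull_min _ (convex_Icc _ _)
    exact Set.union_subset
      (Set.Icc_subset_Icc (min_le_left _ _) (le_max_left _ _))
      (Set.Icc_subset_Icc (min_le_right _ _) (le_max_right _ _))
  · have h1 : min a c ∈ convexHull ℝ (Set.Icc a b ∪ Set.Icc c d) := by
      rcases le_total a c with h | h
      · rw [min_eq_left h]; exact subset_convexHull ℝ _ (Or.inl ⟨le_refl a, hab⟩)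
      · rw [min_eq_right h]; exact subset_convexHull ℝ _ (Or.inr ⟨le_refl c, hcd⟩)
    have h2 : max b d ∈ convexHull ℝ (Set.Icc a b ∪ Set.Icc c d) := by
      rcases le_total b d with h | h
      · rw [max_eq_right h]; exact subset_convexHull ℝ _ (Or.inr ⟨hcd, le_refl d⟩)
      · rw [max_eq_left h]; exact subset_convexHull ℝ _ (Or.inl ⟨hab, le_refl b⟩)
    have := (convex_convexHull ℝ _).segment_subset h1 h2
    rwa [segment_eq_Icc
      (le_trans (le_trans (min_le_left a c) hab) (le_max_left b d))] at this

private lemma mono_of_between {n : ℕ} {t : ℕ → ℝ} (h01 : t 0 < t 1)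
    (hbet : ∀ i, i + 2 < n →
      t (i+1) ∈ Set.Ioo (min (t i) (t (i+2))) (max (t i) (t (i+2)))) :
    ∀ i j, i < j → j < n → t i < t j := by
  have hcons : ∀ i, i + 1 < n → t i < t (i+1) := by
    intro i
    induction i with
    | zero => intro _; exact h01
    | succ i ih =>
      intro h2n
      have prev : t i < t (i+1) := ih (by omega)
      have hb := hbet i (by omega)
      rcases le_total (t (i+2)) (t i) with h | h
      · rw [max_eq_left h] at hb; exact absurd hb.2 (not_lt.2 prev.le)
      · rw [max_eq_right h] at hb; exact hb.2
  intro i j hij hjn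
  induction j with
  | zero => omega
  | succ j ih =>
    rcases Nat.lt_succ_iff_lt_or_eq.mp hij with h | rfl
    · exact lt_trans (ih h (by omega)) (hcons j hjn)
    · exact hcons i hjn

section Aux
variable {n : ℕ} {x : ℕ → (Fin 2 → ℝ)} {t : ℕ → ℝ} {f : ℝ →ᵃ[ℝ] (Fin 2 → ℝ)}

private lemma t_le_iff (hmono : ∀ i j, i < j → j < n → t i < t j)
    {i k : ℕ} (hi : i < n) (hk : k < n) : t i ≤ t k ↔ i ≤ k := by
  constructor
  · intro h
    by_contra hik
    push_neg at hik
    exact absurd h (not_le.2 (hmono k i hik hi))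
  · intro h
    rcases eq_or_lt_of_le h with rfl | h
    · exact le_refl _
    · exact (hmono i k h hk).le

private lemma chlat_form (hfinj : Function.Injective f)
    (hf : ∀ i < n, x i = f (t i))
    (hmono : ∀ i j, i < j → j < n → t i < t j)
    {A : Set (Fin 2 → ℝ)} (hA : ChLat (x '' Set.Iio n) A) :
    A = ∅ ∨ ∃ i j, i ≤ j ∧ j < n ∧ A = f '' Set.Icc (t i) (t j) := by
  induction hA with
  | point y hy =>
    obtain ⟨i, hi, rfl⟩ := hy
    right
    exact ⟨i, i, le_refl i, hi, by rw [Set.Icc_self, Set.image_singleton, hf i hi]⟩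
  | join A B hA hB ihA ihB =>
    rcases ihA with rfl | ⟨i, j, hij, hjn, rfl⟩
    · rcases ihB with rfl | ⟨k, l, hkl, hln, rfl⟩
      · left; rw [Set.union_empty, convexHull_empty]
      · right
        exact ⟨k, l, hkl, hln, by
          rw [Set.empty_union, Convex.convexHull_eq ((convex_Icc _ _).affine_image f)]⟩
    · rcases ihB with rfl | ⟨k, l, hkl, hln, rfl⟩
      · right
        exact ⟨i, j, hij, hjn, by
          rw [Set.union_empty, Convex.convexHull_eq ((convex_Icc _ _).affine_image f)]⟩
      · right
        have hin : i < n := lt_of_le_of_lt hij hjn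
        have hkn : k < n := lt_of_le_of_lt hkl hln
        refine ⟨min i k, max j l,
          le_trans (min_le_left i k) (le_trans hij (le_max_left j l)),
          max_lt hjn hln, ?_⟩
        rw [← Set.image_union, ← AffineMap.image_convexHull,
          hull_Icc_union _ _ _ _ ((t_le_iff hmono hin hjn).2 hij)
            ((t_le_iff hmono hkn hln).2 hkl)]
        have h1 : min (t i) (t k) = t (min i k) := by
          rcases le_total i k with h | h
          · rw [min_eq_left ((t_le_iff hmono hin hkn).2 h), min_eq_left h]
          · rw [min_eq_right ((t_le_iff hmono hkn hin).2 h), min_eq_right h]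
        have h2 : max (t j) (t l) = t (max j l) := by
          rcases le_total j l with h | h
          · rw [max_eq_right ((t_le_iff hmono hjn hln).2 h), max_eq_right h]
          · rw [max_eq_left ((t_le_iff hmono hln hjn).2 h), max_eq_left h]
        rw [h1, h2]
  | meet A B hA hB ihA ihB =>
    rcases ihA with rfl | ⟨i, j, hij, hjn, rfl⟩
    · left; exact Set.empty_inter _
    rcases ihB with rfl | ⟨k, l, hkl, hln, rfl⟩
    · left; exact Set.inter_empty _
    have hin : i < n := lt_of_le_of_lt hij hjn
    have hkn : k < n := lt_of_le_of_lt hkl hln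
    have h1 : t i ⊔ t k = t (max i k) := by
      rcases le_total i k with h | h
      · rw [max_eq_right ((t_le_iff hmono hin hkn).2 h), max_eq_right h]
      · rw [max_eq_left ((t_le_iff hmono hkn hin).2 h), max_eq_left h]
    have h2 : t j ⊓ t l = t (min j l) := by
      rcases le_total j l with h | h
      · rw [min_eq_left ((t_le_iff hmono hjn hln).2 h), min_eq_left h]
      · rw [min_eq_right ((t_le_iff hmono hln hjn).2 h), min_eq_right h]
    rw [← Set.image_inter hfinj, Set.Icc_inter_Icc, h1, h2]
    by_cases h : max i k ≤ min j l
    · right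
      exact ⟨max i k, min j l, h, lt_of_le_of_lt (min_le_left _ _) hjn, rfl⟩
    · left
      push_neg at h
      rw [Set.Icc_eq_empty
        (not_le.2 (hmono _ _ h (max_lt hin hkn))), Set.image_empty]

private lemma mem_image_Icc (hfinj : Function.Injective f)
    (hf : ∀ i < n, x i = f (t i)) {i j k : ℕ} (hk : k < n) :
    x k ∈ f '' Set.Icc (t i) (t j) ↔ t i ≤ t k ∧ t k ≤ t j := by
  rw [hf k hk, hfinj.mem_set_image, Set.mem_Icc]

private lemma image_Icc_eq_hull (hf : ∀ i < n, x i = f (t i))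
    {a b : ℕ} (ha : a < n) (hb : b < n) (hab : t a ≤ t b) :
    f '' Set.Icc (t a) (t b) = convexHull ℝ ({x a} ∪ {x b}) := by
  rw [Set.singleton_union, hf a ha, hf b hb, ← Set.image_singleton (f := ⇑f),
    ← Set.image_insert_eq, ← AffineMap.image_convexHull, convexHull_pair,
    segment_eq_Icc hab]

end Aux

/-- For `n ≥ 2` distinct collinear points `x 0, …, x (n-1)` in `ℝ²` occurring in this
order along their line (each interior one strictly between its neighbours), the lattice
`Lat²({x 0, …, x (n-1)})`, ordered by inclusion, is order-isomorphic to the lattice of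
order-convex subsets of `Fin n`, ordered by inclusion. -/
theorem stmt19 (n : ℕ) (hn : 2 ≤ n) (x : ℕ → (Fin 2 → ℝ))
    (hinj : Set.InjOn x (Set.Iio n))
    (hcol : Collinear ℝ (x '' Set.Iio n))
    (horder : ∀ i, i + 2 < n → Sbtw ℝ (x i) (x (i + 1)) (x (i + 2))) :
    Nonempty ({A : Set (Fin 2 → ℝ) // ChLat (x '' Set.Iio n) A} ≃o
      {S : Set (Fin n) // S.OrdConnected}) := by
  classical
  have h0 : (0 : ℕ) < n := by omega
  have h1 : (1 : ℕ) < n := by omega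
  have hx01 : x 0 ≠ x 1 := fun h => by
    have := hinj (Set.mem_Iio.2 h0) (Set.mem_Iio.2 h1) h
    omega
  obtain ⟨p, v, hpv⟩ := (collinear_iff_exists_forall_eq_smul_vadd (x '' Set.Iio n)).1 hcol
  choose r hr using fun (i : ℕ) (hi : i < n) => hpv (x i) ⟨i, hi, rfl⟩
  set t0 : ℕ → ℝ := fun i => if hi : i < n then r i hi else 0 with ht0
  have hx0 : ∀ i, i < n → x i = t0 i • v + p := by
    intro i hi
    rw [ht0]
    simp only [dif_pos hi]
    rw [hr i hi]
    rfl
  have hv : v ≠ 0 := by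
    intro hv0
    apply hx01
    rw [hx0 0 h0, hx0 1 h1, hv0, smul_zero, smul_zero]
  have hparam : ∀ s u : ℝ, s • v + p = u • v + p → s = u := by
    intro s u h
    exact smul_left_injective ℝ hv (add_right_cancel h)
  have tne : ∀ i j, i < n → j < n → i ≠ j → t0 i ≠ t0 j := by
    intro i j hi hj hij h
    apply hij
    apply hinj (Set.mem_Iio.2 hi) (Set.mem_Iio.2 hj)
    rw [hx0 i hi, hx0 j hj, h]
  have key : ∀ i, i + 2 < n →
      t0 (i+1) ∈ Set.Ioo (min (t0 i) (t0 (i+2))) (max (t0 i) (t0 (i+2))) := by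
    intro i hi
    obtain ⟨a, b, ha, hb, hab, heq⟩ := (horder i hi).wbtw.mem_segment
    have comp : a • (t0 i • v + p) + b • (t0 (i+2) • v + p)
        = (a * t0 i + b * t0 (i+2)) • v + p := by
      have hb' : b = 1 - a := by linarith
      subst hb'
      module
    rw [hx0 i (by omega), hx0 (i+1) (by omega), hx0 (i+2) hi, comp] at heq
    have ht : t0 (i+1) = a * t0 i + b * t0 (i+2) := (hparam _ _ heq).symm
    have hmem : t0 (i+1) ∈ segment ℝ (t0 i) (t0 (i+2)) :=
      ⟨a, b, ha, hb, hab, by rw [smul_eq_mul, smul_eq_mul, ← ht]⟩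
    have hne1 : t0 i ≠ t0 (i+1) := tne _ _ (by omega) (by omega) (by omega)
    have hne2 : t0 (i+2) ≠ t0 (i+1) := tne _ _ hi (by omega) (by omega)
    rw [segment_eq_uIcc, Set.mem_uIcc] at hmem
    rcases hmem with ⟨hl, hr'⟩ | ⟨hl, hr'⟩
    · exact ⟨lt_of_le_of_lt (min_le_left _ _) (lt_of_le_of_ne hl hne1),
        lt_of_lt_of_le (lt_of_le_of_ne hr' (Ne.symm hne2)) (le_max_right _ _)⟩
    · exact ⟨lt_of_le_of_lt (min_le_right _ _) (lt_of_le_of_ne hl hne2),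
        lt_of_lt_of_le (lt_of_le_of_ne hr' (Ne.symm hne1)) (le_max_left _ _)⟩
  obtain ⟨v', t, hv', hx', hmono⟩ :
      ∃ (v' : Fin 2 → ℝ) (t : ℕ → ℝ), v' ≠ 0 ∧ (∀ i < n, x i = t i • v' + p) ∧
        (∀ i j, i < j → j < n → t i < t j) := by
    rcases lt_or_gt_of_ne (tne 0 1 h0 h1 (by omega)) with h | h
    · exact ⟨v, t0, hv, hx0, mono_of_between h key⟩
    · refine ⟨-v, fun i => -t0 i, neg_ne_zero.2 hv, ?_, ?_⟩
      · intro i hi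
        rw [hx0 i hi, smul_neg, neg_smul, neg_neg]
      · refine mono_of_between (neg_lt_neg h) ?_
        intro i hi
        have hk := key i hi
        exact ⟨by rw [min_neg_neg]; exact neg_lt_neg hk.2,
          by rw [max_neg_neg]; exact neg_lt_neg hk.1⟩
  set f : ℝ →ᵃ[ℝ] (Fin 2 → ℝ) := AffineMap.lineMap p (v' + p) with hfdef
  have hfapp : ∀ s : ℝ, f s = s • v' + p := by
    intro s
    rw [hfdef]
    simp [AffineMap.lineMap_apply, vsub_eq_sub, vadd_eq_add, add_sub_cancel_right]
  have hfinj : Function.Injective f := by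
    intro s u h
    rw [hfapp, hfapp] at h
    exact smul_left_injective ℝ hv' (add_right_cancel h)
  have hf : ∀ i < n, x i = f (t i) := by
    intro i hi
    rw [hfapp, hx' i hi]
  have hle : ∀ {i k : ℕ}, i < n → k < n → (t i ≤ t k ↔ i ≤ k) :=
    fun hi hk => t_le_iff hmono hi hk
  set X := x '' Set.Iio n with hX
  -- order-connectedness of the fiber sets
  have hOC : ∀ (A : Set (Fin 2 → ℝ)), ChLat X A →
      Set.OrdConnected {k : Fin n | x k.val ∈ A} := by
    intro A hA
    constructor
    intro a ha b hb c hc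
    rcases chlat_form hfinj hf hmono hA with rfl | ⟨i, j, hij, hjn, rfl⟩
    · exact absurd ha (by simp)
    · simp only [Set.mem_setOf_eq] at ha hb ⊢
      rw [mem_image_Icc hfinj hf a.isLt] at ha
      rw [mem_image_Icc hfinj hf b.isLt] at hb
      rw [mem_image_Icc hfinj hf c.isLt]
      exact ⟨ha.1.trans ((hle a.isLt c.isLt).2 (Fin.le_def.mp hc.1)),
        ((hle c.isLt b.isLt).2 (Fin.le_def.mp hc.2)).trans hb.2⟩
  let F : {A : Set (Fin 2 → ℝ) // ChLat X A} → {S : Set (Fin n) // S.OrdConnected} :=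
    fun A => ⟨{k : Fin n | x k.val ∈ A.val}, hOC A.1 A.2⟩
  have hrel : ∀ A B : {A : Set (Fin 2 → ℝ) // ChLat X A},
      (F A).1 ⊆ (F B).1 ↔ A.1 ⊆ B.1 := by
    intro A B
    constructor
    · intro h
      rcases chlat_form hfinj hf hmono A.2 with hA0 | ⟨i, j, hij, hjn, hAe⟩
      · rw [hA0]; exact Set.empty_subset _
      have hin : i < n := lt_of_le_of_lt hij hjn
      have hxiA : (⟨i, hin⟩ : Fin n) ∈ (F A).1 := by
        show x i ∈ A.1
        rw [hAe, mem_image_Icc hfinj hf hin]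
        exact ⟨le_refl _, (hle hin hjn).2 hij⟩
      have hxjA : (⟨j, hjn⟩ : Fin n) ∈ (F A).1 := by
        show x j ∈ A.1
        rw [hAe, mem_image_Icc hfinj hf hjn]
        exact ⟨(hle hin hjn).2 hij, le_refl _⟩
      rcases chlat_form hfinj hf hmono B.2 with hB0 | ⟨k, l, hkl, hln, hBe⟩
      · exfalso
        have := h hxiA
        rw [Set.mem_setOf_eq, hB0] at this
        exact this
      · have hkn : k < n := lt_of_le_of_lt hkl hln
        have hiB := h hxiA
        have hjB := h hxjA
        rw [Set.mem_setOf_eq, hBe, mem_image_Icc hfinj hf hin] at hiB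
        rw [Set.mem_setOf_eq, hBe, mem_image_Icc hfinj hf hjn] at hjB
        rw [hAe, hBe]
        exact Set.image_mono (Set.Icc_subset_Icc hiB.1 hjB.2)
    · intro h k hk
      exact h hk
  have hFinj : Function.Injective F := by
    intro A B h
    have h1' := (hrel A B).1 (le_of_eq (congrArg Subtype.val h))
    have h2' := (hrel B A).1 (le_of_eq (congrArg Subtype.val h.symm))
    exact Subtype.ext (le_antisymm h1' h2')
  have hFsurj : Function.Surjective F := by
    rintro ⟨S, hS⟩
    by_cases hne : S.Nonempty
    · obtain ⟨a, haS, hamin⟩ := Set.exists_min_image S id (Set.toFinite S) hne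
      obtain ⟨b, hbS, hbmax⟩ := Set.exists_max_image S id (Set.toFinite S) hne
      have hab : t a.val ≤ t b.val := (hle a.isLt b.isLt).2 (Fin.le_def.mp (hamin b hbS))
      have hchlat : ChLat X (f '' Set.Icc (t a.val) (t b.val)) := by
        rw [image_Icc_eq_hull hf a.isLt b.isLt hab]
        exact ChLat.join _ _
          (ChLat.point _ ⟨a.val, Set.mem_Iio.2 a.isLt, rfl⟩)
          (ChLat.point _ ⟨b.val, Set.mem_Iio.2 b.isLt, rfl⟩)
      refine ⟨⟨_, hchlat⟩, ?_⟩
      apply Subtype.ext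
      ext k
      show x k.val ∈ f '' Set.Icc (t a.val) (t b.val) ↔ k ∈ S
      rw [mem_image_Icc hfinj hf k.isLt]
      constructor
      · intro ⟨h1', h2'⟩
        exact hS.out haS hbS ⟨Fin.le_def.mpr ((hle a.isLt k.isLt).1 h1'),
          Fin.le_def.mpr ((hle k.isLt b.isLt).1 h2')⟩
      · intro hk
        exact ⟨(hle a.isLt k.isLt).2 (Fin.le_def.mp (hamin k hk)),
          (hle k.isLt b.isLt).2 (Fin.le_def.mp (hbmax k hk))⟩
    · have hSe : S = ∅ := Set.not_nonempty_iff_eq_empty.1 hne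
      subst hSe
      have hchlat : ChLat X (∅ : Set (Fin 2 → ℝ)) := by
        have h01 : ({x 0} : Set (Fin 2 → ℝ)) ∩ {x 1} = ∅ := by
          rw [Set.singleton_inter_eq_empty, Set.mem_singleton_iff]
          exact hx01
        rw [← h01]
        exact ChLat.meet _ _
          (ChLat.point _ ⟨0, Set.mem_Iio.2 h0, rfl⟩)
          (ChLat.point _ ⟨1, Set.mem_Iio.2 h1, rfl⟩)
      refine ⟨⟨∅, hchlat⟩, ?_⟩
      apply Subtype.ext
      ext k
      simp [F]
  exact ⟨{ toEquiv := Equiv.ofBijective F ⟨hFinj, hFsurj⟩,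
           map_rel_iff' := fun {A B} => hrel A B }⟩
end
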